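/- arXiv:2103.14946 — 9 statements merged into one kernel-verified Lean document; each statement's English description precedes it below -/
import Mathlib

section
/- For every relation R ⊆ 𝒫(V) × V satisfying Reflexivity, Transitivity and Monotonicity, there exists a dependence model M = (O, I, A) with A nonempty whose global dependence relation coincides with R: for all X ⊆ V and y ∈ V, D^M_X y holds iff R_X y. Moreover, if V is finite, then M can be taken finite, with the set A of admissible assignments of cardinality at most 2^|V|. -/
/-- The local dependence relation at assignment `s` in a dependence model with
admissible assignments `A` (the interpretation of predicate symbols is irrelevant here). -/
def localDep {V O : Type} (A : Set (V → O)) (s : V → O) (X : Set V) (y : V) : Prop :=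
  ∀ t ∈ A, (∀ x ∈ X, s x = t x) → s y = t y

/-- The global dependence relation of the model: `D^M_X y` iff `D^s_X y` for all `s ∈ A`. -/
def globalDep {V O : Type} (A : Set (V → O)) (X : Set V) (y : V) : Prop :=
  ∀ s ∈ A, localDep A s X y

/-- `R` satisfies Reflexivity: `R_{{x}} x` for all `x ∈ V`. -/
def RelReflexive {V : Type} (R : Set V → V → Prop) : Prop :=
  ∀ x : V, R {x} x

/-- `R` satisfies Transitivity: `R_X Y` and `R_Y Z` imply `R_X Z`. -/
def RelTransitive {V : Type} (R : Set V → V → Prop) : Prop :=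
  ∀ X Y Z : Set V, (∀ y ∈ Y, R X y) → (∀ z ∈ Z, R Y z) → ∀ z ∈ Z, R X z

/-- `R` satisfies Monotonicity: `R_X y` and `X ⊆ Z` imply `R_Z y`. -/
def RelMonotone {V : Type} (R : Set V → V → Prop) : Prop :=
  ∀ (X Z : Set V) (y : V), R X y → X ⊆ Z → R Z y

/-!
The model has one assignment per `R`-closed set `C` (a set with `R C y → y ∈ C`): it sends the
points of `C` to a common value and every other point to the name of `C` itself. Two such
assignments agree on `X` only if they coincide or both send `X` to the common value, so the
global dependence `D_X y` says that every closed set containing `X` contains `y`. By the three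
axioms, `{z | R X z}` is the least closed set containing `X`, so this is exactly `R X y`.
-/

open Set

variable {V : Type}

section SetAssignment

open Classical in
noncomputable def setAssignment (C : Set V) (x : V) : Option (Set V) :=
  if x ∈ C then none else some C

theorem setAssignment_of_mem {C : Set V} {x : V} (hx : x ∈ C) : setAssignment C x = none :=
  if_pos hx

theorem setAssignment_of_notMem {C : Set V} {x : V} (hx : x ∉ C) :
    setAssignment C x = some C :=
  if_neg hx

theorem eq_or_subset_inter_of_setAssignment_eqOn {C D X : Set V}
    (h : ∀ x ∈ X, setAssignment C x = setAssignment D x) : C = D ∨ X ⊆ C ∩ D := by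
  refine or_iff_not_imp_right.2 fun hX => ?_
  obtain ⟨x, hxX, hx⟩ := not_subset.1 hX
  have hCD := h x hxX
  unfold setAssignment at hCD
  split_ifs at hCD <;> simp_all

theorem globalDep_image_setAssignment_iff {𝒞 : Set (Set V)} (huniv : univ ∈ 𝒞)
    (X : Set V) (y : V) : globalDep (setAssignment '' 𝒞) X y ↔ ∀ C ∈ 𝒞, X ⊆ C → y ∈ C := by
  constructor
  · intro hdep C hC hXC
    have hy : setAssignment C y = setAssignment univ y :=
      hdep _ (mem_image_of_mem _ hC) _ (mem_image_of_mem _ huniv) fun x hx => by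
        rw [setAssignment_of_mem (hXC hx), setAssignment_of_mem (mem_univ x)]
    by_contra hyC
    rw [setAssignment_of_notMem hyC, setAssignment_of_mem (mem_univ y)] at hy
    exact Option.some_ne_none _ hy
  · rintro hcl _ ⟨C, hC, rfl⟩ _ ⟨D, hD, rfl⟩ hagree
    rcases eq_or_subset_inter_of_setAssignment_eqOn hagree with rfl | hX
    · rfl
    · rw [setAssignment_of_mem (hcl C hC fun x hx => (hX hx).1),
        setAssignment_of_mem (hcl D hD fun x hx => (hX hx).2)]

theorem ncard_image_setAssignment_le [Finite V] (𝒞 : Set (Set V)) :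
    (setAssignment '' 𝒞).ncard ≤ 2 ^ Nat.card V := by
  have := Fintype.ofFinite V
  calc (setAssignment '' 𝒞).ncard ≤ 𝒞.ncard := ncard_image_le (toFinite 𝒞)
    _ ≤ Nat.card (Set V) := ncard_le_card 𝒞
    _ = 2 ^ Nat.card V := by rw [Nat.card_eq_fintype_card, Fintype.card_set, Nat.card_eq_fintype_card]

end SetAssignment

section RelClosed

variable {R : Set V → V → Prop}

def IsRelClosed (R : Set V → V → Prop) (C : Set V) : Prop :=
  ∀ y, R C y → y ∈ C

theorem isRelClosed_univ (R : Set V → V → Prop) : IsRelClosed R univ :=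
  fun y _ => mem_univ y

theorem RelTransitive.isRelClosed_setOf (hT : RelTransitive R) (X : Set V) :
    IsRelClosed R {z | R X z} :=
  fun z hz => hT X {z | R X z} {z} (fun _ h => h) (fun _ h => h ▸ hz) z rfl

theorem rel_of_mem (hR : RelReflexive R) (hM : RelMonotone R) {X : Set V} {x : V}
    (hx : x ∈ X) : R X x :=
  hM {x} X x (hR x) (singleton_subset_iff.2 hx)

theorem rel_iff_forall_isRelClosed (hR : RelReflexive R) (hT : RelTransitive R)
    (hM : RelMonotone R) (X : Set V) (y : V) :
    R X y ↔ ∀ C, IsRelClosed R C → X ⊆ C → y ∈ C :=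
  ⟨fun hXy C hC hXC => hC y (hM X C y hXy hXC),
    fun h => h _ (hT.isRelClosed_setOf X) fun _ hx => rel_of_mem hR hM hx⟩

end RelClosed

/-- Every relation `R ⊆ 𝒫(V) × V` satisfying Reflexivity, Transitivity and Monotonicity
is the global dependence relation of some dependence model with a nonempty set of
admissible assignments; moreover, if `V` is finite, the model can be taken finite with
at most `2^|V|` admissible assignments. -/
theorem stmt2 {V : Type} (R : Set V → V → Prop)
    (hR : RelReflexive R) (hT : RelTransitive R) (hM : RelMonotone R) :
    ∃ (O : Type) (A : Set (V → O)), A.Nonempty ∧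
      (∀ (X : Set V) (y : V), globalDep A X y ↔ R X y) ∧
      (Finite V → Finite O ∧ A.ncard ≤ 2 ^ Nat.card V) := by
  refine ⟨Option (Set V), setAssignment '' {C | IsRelClosed R C},
    ⟨_, mem_image_of_mem _ (isRelClosed_univ R)⟩, fun X y => ?_,
    fun _ => ⟨inferInstance, ncard_image_setAssignment_le _⟩⟩
  rw [globalDep_image_setAssignment_iff (isRelClosed_univ R),
    rel_iff_forall_isRelClosed hR hT hM]
  rfl
end

section
/- For every relation R ⊆ 𝒫(V) × V satisfying Reflexivity, Transitivity and Monotonicity, there exists a dependence model M = (O, I, A) with A nonempty in which R coincides with the local dependence relation at every assignment: for all s ∈ A, X ⊆ V and y ∈ V, D^s_X y holds iff R_X y (hence R also coincides with the global dependence relation D^M). Moreover, if V is finite, then M can be taken finite, with the set A of admissible assignments of cardinality at most 2^(2^|V|). -/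
open Set

def closureOperatorOfRel {V : Type} (R : Set V → V → Prop)
    (hR : RelReflexive R) (hT : RelTransitive R) (hM : RelMonotone R) :
    ClosureOperator (Set V) :=
  ClosureOperator.mk₂ (fun X => {y | R X y})
    (fun X x hx => hM {x} X x (hR x) (singleton_subset_iff.2 hx))
    (fun X Y hXY => hT Y X {z | R X z} hXY fun _ hz => hz)

theorem globalDep_iff_of_forall_localDep_iff {V O : Type} {A : Set (V → O)} {X : Set V} {y : V}
    {P : Prop} (hA : A.Nonempty) (h : ∀ s ∈ A, localDep A s X y ↔ P) :
    globalDep A X y ↔ P := by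
  obtain ⟨s, hs⟩ := hA
  exact ⟨fun hg => (h s hs).1 (hg s hs), fun hP t ht => (h t ht).2 hP⟩

section ClosureModel

variable {V : Type} (c : ClosureOperator (Set V))

def closureAssignment (f : Set V → Prop) (v : V) : Set V → Prop :=
  fun Z => f Z ∧ v ∉ c Z

def closureModel : Set (V → Set V → Prop) :=
  range (closureAssignment c)

variable {c}

theorem localDep_closureModel_of_mem {f : Set V → Prop} {X : Set V} {y : V} (hy : y ∈ c X) :
    localDep (closureModel c) (closureAssignment c f) X y := by
  rintro _ ⟨g, rfl⟩ hagree
  funext Z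
  by_cases hyZ : y ∈ c Z
  · simp [closureAssignment, hyZ]
  · obtain ⟨x, hxX, hxZ⟩ := not_subset.1 fun hXZ => hyZ (c.le_closure_iff.1 hXZ hy)
    simpa [closureAssignment, hxZ, hyZ] using congrFun (hagree x hxX) Z

theorem mem_of_localDep_closureModel {f : Set V → Prop} {X : Set V} {y : V}
    (h : localDep (closureModel c) (closureAssignment c f) X y) : y ∈ c X := by
  classical
  by_contra hy
  have hagree : ∀ x ∈ X,
      closureAssignment c f x = closureAssignment c (Function.update f X (¬ f X)) x := by
    intro x hx
    funext Z
    by_cases hZ : Z = X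
    · subst hZ
      simp [closureAssignment, c.le_closure Z hx]
    · simp [closureAssignment, Function.update_of_ne hZ]
  simpa [closureAssignment, hy] using congrFun (h _ ⟨_, rfl⟩ hagree) X

theorem localDep_closureModel_iff {f : Set V → Prop} {X : Set V} {y : V} :
    localDep (closureModel c) (closureAssignment c f) X y ↔ y ∈ c X :=
  ⟨mem_of_localDep_closureModel, localDep_closureModel_of_mem⟩

variable (c)

theorem ncard_closureModel_le [Finite V] : (closureModel c).ncard ≤ 2 ^ 2 ^ Nat.card V :=
  calc (closureModel c).ncard ≤ Nat.card (Set V → Prop) := Finite.card_range_le _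
    _ = 2 ^ 2 ^ Nat.card V := by
      have := Fintype.ofFinite V
      simp only [Nat.card_eq_fintype_card, Fintype.card_fun, Fintype.card_prop, Fintype.card_set]

end ClosureModel

/-- Every relation `R ⊆ 𝒫(V) × V` satisfying Reflexivity, Transitivity and Monotonicity
coincides with the local dependence relation at every assignment of some dependence model
with a nonempty set of admissible assignments (hence also with its global dependence
relation); moreover, if `V` is finite, the model can be taken finite with at most
`2^(2^|V|)` admissible assignments. -/
theorem stmt3 {V : Type} (R : Set V → V → Prop)
    (hR : RelReflexive R) (hT : RelTransitive R) (hM : RelMonotone R) :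
    ∃ (O : Type) (A : Set (V → O)), A.Nonempty ∧
      (∀ s ∈ A, ∀ (X : Set V) (y : V), localDep A s X y ↔ R X y) ∧
      (∀ (X : Set V) (y : V), globalDep A X y ↔ R X y) ∧
      (Finite V → Finite O ∧ A.ncard ≤ 2 ^ 2 ^ Nat.card V) := by
  set c := closureOperatorOfRel R hR hT hM
  have hne : (closureModel c).Nonempty := range_nonempty _
  have hloc : ∀ s ∈ closureModel c, ∀ X y, localDep (closureModel c) s X y ↔ R X y := by
    rintro _ ⟨f, rfl⟩ X y
    exact localDep_closureModel_iff
  exact ⟨Set V → Prop, closureModel c, hne, hloc,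
    fun X y => globalDep_iff_of_forall_localDep_iff hne fun s hs => hloc s hs X y,
    fun _ => ⟨inferInstance, ncard_closureModel_le c⟩⟩
end

section
/- Let 𝓡 ⊆ 𝒫(𝒫(V) × V) be a family of relations, each satisfying Reflexivity, Transitivity and Monotonicity, such that all relations in 𝓡 agree on constants (i.e., for all y ∈ V and R, R' ∈ 𝓡: R_∅ y holds iff R'_∅ y holds). Then there exists a dependence model M = (O, I, A) such that 𝓡 coincides with the family {D^s : s ∈ A} of all local dependence relations of M. Moreover, if V is finite, then M can be taken to be finite. -/
def RelClosed {V : Type} (R : Set V → V → Prop) (C : Set V) : Prop :=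
  ∀ Y z, R Y z → Y ⊆ C → z ∈ C

section Closure

variable {V : Type} {R : Set V → V → Prop}

theorem RelClosed.mem_of_rel_empty {C : Set V} (hC : RelClosed R C) {v : V} (hv : R ∅ v) :
    v ∈ C :=
  hC ∅ v hv (Set.empty_subset C)

theorem RelClosed.sInter {𝒞 : Set (Set V)} (h𝒞 : ∀ C ∈ 𝒞, RelClosed R C) :
    RelClosed R (⋂₀ 𝒞) :=
  fun Y z hYz hY C hC => h𝒞 C hC Y z hYz fun _ hy => hY hy C hC

theorem relClosed_setOf_rel (hT : RelTransitive R) (X : Set V) : RelClosed R {y | R X y} :=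
  fun Y z hYz hY => hT X Y {z} hY (fun _ hz' => hz' ▸ hYz) z rfl

theorem rel_iff_forall_relClosed (hRefl : RelReflexive R) (hT : RelTransitive R)
    (hM : RelMonotone R) {X : Set V} {y : V} :
    R X y ↔ ∀ C, RelClosed R C → X ⊆ C → y ∈ C := by
  refine ⟨fun hXy C hC hXC => hC X y hXy hXC, fun h => ?_⟩
  exact h _ (relClosed_setOf_rel hT X) fun x hx =>
    hM {x} X x (hRefl x) (Set.singleton_subset_iff.mpr hx)

end Closure

section CanonicalModel

variable {V : Type}

abbrev CanonicalObj (V : Type) : Type := Option ((Set V → V → Prop) × Set (Set V))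

open Classical in
noncomputable def canonicalAssignment (R : Set V → V → Prop) (S : Set (Set V)) (v : V) :
    CanonicalObj V :=
  if R ∅ v then none else some (R, {C ∈ S | v ∉ C})

def canonicalAssignments (𝓡 : Set (Set V → V → Prop)) : Set (V → CanonicalObj V) :=
  {s | ∃ R ∈ 𝓡, ∃ S ⊆ {C | RelClosed R C}, s = canonicalAssignment R S}

theorem canonicalAssignment_eq_iff {R : Set V → V → Prop} {S T : Set (Set V)}
    (hS : S ⊆ {C | RelClosed R C}) (hT : T ⊆ {C | RelClosed R C}) {v : V} :
    canonicalAssignment R S v = canonicalAssignment R T v ↔ v ∈ ⋂₀ symmDiff S T := by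
  by_cases hv : R ∅ v
  · simp only [canonicalAssignment, if_pos hv, true_iff, Set.mem_sInter]
    intro C hC
    exact (Set.symmDiff_subset_union hC).elim (fun h => (hS h).mem_of_rel_empty hv)
      (fun h => (hT h).mem_of_rel_empty hv)
  · simp only [canonicalAssignment, if_neg hv, Option.some.injEq, Prod.mk.injEq, true_and,
      Set.ext_iff, Set.mem_ofPred_eq, Set.mem_sInter, Set.mem_symmDiff]
    grind

theorem canonicalAssignment_eq_iff_of_ne {R R' : Set V → V → Prop} (hRR' : R ≠ R')
    (S T : Set (Set V)) {v : V} :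
    canonicalAssignment R S v = canonicalAssignment R' T v ↔ R ∅ v ∧ R' ∅ v := by
  unfold canonicalAssignment
  by_cases hv : R ∅ v <;> by_cases hv' : R' ∅ v <;> simp [hv, hv', hRR']

theorem relClosed_setOf_canonicalAssignment_eq {𝓡 : Set (Set V → V → Prop)}
    (hTrans : ∀ R ∈ 𝓡, RelTransitive R)
    (hagree : ∀ (y : V), ∀ R ∈ 𝓡, ∀ R' ∈ 𝓡, (R ∅ y ↔ R' ∅ y))
    {R R' : Set V → V → Prop} (hR : R ∈ 𝓡) (hR' : R' ∈ 𝓡)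
    {S T : Set (Set V)} (hS : S ⊆ {C | RelClosed R C}) (hT : T ⊆ {C | RelClosed R' C}) :
    RelClosed R {v | canonicalAssignment R S v = canonicalAssignment R' T v} := by
  by_cases hRR' : R = R'
  · subst hRR'
    simp_rw [canonicalAssignment_eq_iff hS hT]
    exact RelClosed.sInter fun C hC =>
      (Set.symmDiff_subset_union hC).elim (fun h => hS h) (fun h => hT h)
  · have hconst : {v | canonicalAssignment R S v = canonicalAssignment R' T v} = {v | R ∅ v} := by
      ext v
      simp only [Set.mem_ofPred_eq, canonicalAssignment_eq_iff_of_ne hRR']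
      exact ⟨And.left, fun hv => ⟨hv, (hagree v R hR R' hR').mp hv⟩⟩
    rw [hconst]
    exact relClosed_setOf_rel (hTrans R hR) ∅

theorem localDep_canonicalAssignment {𝓡 : Set (Set V → V → Prop)}
    (h : ∀ R ∈ 𝓡, RelReflexive R ∧ RelTransitive R ∧ RelMonotone R)
    (hagree : ∀ (y : V), ∀ R ∈ 𝓡, ∀ R' ∈ 𝓡, (R ∅ y ↔ R' ∅ y))
    {R : Set V → V → Prop} (hR : R ∈ 𝓡) {S : Set (Set V)} (hS : S ⊆ {C | RelClosed R C}) :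
    localDep (canonicalAssignments 𝓡) (canonicalAssignment R S) = R := by
  obtain ⟨hRefl, hTrans, hMono⟩ := h R hR
  funext X y
  refine propext ⟨fun hdep => ?_, fun hXy => ?_⟩
  · refine (rel_iff_forall_relClosed hRefl hTrans hMono).mpr fun C hC hXC => ?_
    have hflip : symmDiff S {C} ⊆ {C | RelClosed R C} := fun D hD =>
      (Set.symmDiff_subset_union hD).elim (fun h => hS h) fun h => (Set.mem_singleton_iff.mp h) ▸ hC
    have hagreeC : ∀ v, canonicalAssignment R S v = canonicalAssignment R (symmDiff S {C}) v ↔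
        v ∈ C := by
      intro v
      rw [canonicalAssignment_eq_iff hS hflip, symmDiff_symmDiff_cancel_left, Set.sInter_singleton]
    exact (hagreeC y).mp <| hdep _ ⟨R, hR, _, hflip, rfl⟩ fun x hx => (hagreeC x).mpr (hXC hx)
  · rintro t ⟨R', hR', T, hT, rfl⟩ hXt
    exact relClosed_setOf_canonicalAssignment_eq (fun R hR => (h R hR).2.1) hagree hR hR' hS hT X y hXy hXt

end CanonicalModel

/-- Let `𝓡` be a family of relations on `𝒫(V) × V`, each satisfying Reflexivity,
Transitivity and Monotonicity, all agreeing on constants (`R_∅ y` iff `R'_∅ y`).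
Then `𝓡` coincides with the family of all local dependence relations of some dependence
model; moreover, if `V` is finite, the model can be taken finite. -/
theorem stmt4 {V : Type} (𝓡 : Set (Set V → V → Prop))
    (h : ∀ R ∈ 𝓡, RelReflexive R ∧ RelTransitive R ∧ RelMonotone R)
    (hagree : ∀ (y : V), ∀ R ∈ 𝓡, ∀ R' ∈ 𝓡, (R ∅ y ↔ R' ∅ y)) :
    ∃ (O : Type) (A : Set (V → O)),
      𝓡 = {D | ∃ s ∈ A, D = localDep A s} ∧
      (Finite V → Finite O) := by
  refine ⟨CanonicalObj V, canonicalAssignments 𝓡, ?_, fun _ => inferInstance⟩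
  ext D
  constructor
  · intro hD
    have hS : (∅ : Set (Set V)) ⊆ {C | RelClosed D C} := Set.empty_subset _
    exact ⟨_, ⟨D, hD, ∅, hS, rfl⟩, (localDep_canonicalAssignment h hagree hD hS).symm⟩
  · rintro ⟨_, ⟨R, hR, S, hS, rfl⟩, rfl⟩
    rwa [localDep_canonicalAssignment h hagree hR hS]
end

section
/- (First-order translation) Fix a finite set of variables V = {v₁,…,v_n}. There is a first-order language L whose relation symbols are the symbols of Pred (with their arities) together with one fresh n-ary relation symbol A, and a map tr from LFD formulas over V to first-order L-formulas with free variables among V, such that: (i) the free variables of tr(φ) are exactly Free(φ); and (ii) for every dependence model M = (O, I, A₀) and every s ∈ A₀, M, s ⊨ φ iff tr(φ) is true in the L-structure T(M) under the variable assignment s, where T(M) has universe O, interprets each P ∈ Pred by I(P), and interprets A by {(s(v₁),…,s(v_n)) : s ∈ A₀}. -/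
/-!
The translation is the standard one. `𝔻_X φ` becomes a universal quantification over a fresh
copy `t` of all `n` variables, guarded by `A t` and by `s =_X t`, with `φ` translated at `t`;
`D_X y` quantifies over two such copies and says that they agree on `y`. The body of each
quantifier refers to the current assignment only through the equations on `X`, so the free
variables come out as `X`; and the two-copy form of `D_X y` is equivalent to the one-copy form
because `s ∈ A₀` is itself one of the copies.
-/

namespace LFD

/-- LFD formulas over variables `V` and a relational vocabulary `Pred` with arity map `ar`:
atoms `P x₁…x_n`, negation, conjunction, dependence modalities `𝔻_X φ`,
and dependence atoms `D_X y` (with `X ⊆ V` finite). -/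
inductive Formula (V Pred : Type) (ar : Pred → ℕ) : Type where
  | atom (P : Pred) (x : Fin (ar P) → V)
  | neg (φ : Formula V Pred ar)
  | conj (φ ψ : Formula V Pred ar)
  | dd (X : Finset V) (φ : Formula V Pred ar)
  | dep (X : Finset V) (y : V)

variable {V Pred O : Type} {ar : Pred → ℕ}

/-- The free variables of an LFD formula. -/
def Free [DecidableEq V] : Formula V Pred ar → Finset V
  | .atom _ x => Finset.univ.image x
  | .neg φ => Free φ
  | .conj φ ψ => Free φ ∪ Free ψ
  | .dd X _ => X
  | .dep X _ => X

/-- A dependence model: an interpretation `I` of each predicate symbol as a set of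
tuples of objects, together with a set `A` of admissible assignments. -/
structure DepModel (V Pred : Type) (ar : Pred → ℕ) (O : Type) where
  I : (P : Pred) → Set (Fin (ar P) → O)
  A : Set (V → O)

/-- `s =_X t` : the assignments `s` and `t` agree on all variables in `X`. -/
def agree (X : Set V) (s t : V → O) : Prop := ∀ x ∈ X, s x = t x

/-- Truth of an LFD formula at an assignment in a dependence model. -/
def Sat (M : DepModel V Pred ar O) : Formula V Pred ar → (V → O) → Prop
  | .atom P x, s => (fun i => s (x i)) ∈ M.I P
  | .neg φ, s => ¬ Sat M φ s
  | .conj φ ψ, s => Sat M φ s ∧ Sat M ψ s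
  | .dd X φ, s => ∀ t ∈ M.A, agree (↑X) s t → Sat M φ t
  | .dep X y, s => ∀ t ∈ M.A, agree (↑X) s t → s y = t y

end LFD

namespace LFD

/-- The first-order language whose relation symbols are those of `Pred` (with their
arities) together with one fresh `n`-ary relation symbol `A`. -/
def Lang (Pred : Type) (ar : Pred → ℕ) (n : ℕ) : FirstOrder.Language where
  Functions := fun _ => Empty
  Relations := fun m => ({P : Pred // ar P = m}) ⊕ (PLift (m = n))

/-- The `L`-structure `T(M)` associated to a dependence model `M` over the variables
`V = Fin n`: universe `O`, each `P ∈ Pred` interpreted by `I(P)`, and the fresh symbol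
`A` interpreted by `{(s(v₁),…,s(v_n)) : s ∈ A₀}`. -/
def TStr {Pred : Type} {ar : Pred → ℕ} {n : ℕ} {O : Type}
    (M : DepModel (Fin n) Pred ar O) : (Lang Pred ar n).Structure O where
  funMap := fun f _ => f.elim
  RelMap := fun {m} r v =>
    match r with
    | Sum.inl P => (fun i => v (Fin.cast P.2 i)) ∈ M.I P.1
    | Sum.inr h => ∃ s ∈ M.A, ∀ i : Fin n, v (Fin.cast h.down.symm i) = s i

end LFD

namespace FirstOrder.Language

variable {L : Language} {α β : Type*}

namespace Term

theorem varFinsetLeft_relabel_eq_empty [DecidableEq β] {γ δ : Type*} {g : γ → β ⊕ δ}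
    (hg : ∀ x, (g x).isRight) (t : L.Term γ) : (t.relabel g).varFinsetLeft = ∅ := by
  induction t with
  | var x =>
    obtain ⟨d, hd⟩ := Sum.isRight_iff.1 (hg x)
    simp [relabel, hd]
  | func f ts ih => simp [relabel, ih, Finset.eq_empty_iff_forall_notMem]

end Term

namespace BoundedFormula

theorem realize_relabel_sumInr_formula {M : Type*} [L.Structure M] {n : ℕ}
    (φ : L.Formula (Fin n)) {v : α → M} {xs : Fin n → M} :
    (relabel Sum.inr φ).Realize v xs ↔ φ.Realize xs := by
  simp only [realize_relabel, Formula.Realize, Sum.elim_comp_inr, Fin.castAdd_zero]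
  congr!

variable [DecidableEq α]

theorem freeVarFinset_relabel_eq_empty {γ : Type*} {m k : ℕ} {g : γ → α ⊕ Fin m}
    (hg : ∀ x, (g x).isRight) (φ : L.BoundedFormula γ k) :
    (φ.relabel g).freeVarFinset = ∅ := by
  have hg' : ∀ k x, (relabelAux g k x).isRight := by
    rintro k (x | x)
    · obtain ⟨i, hi⟩ := Sum.isRight_iff.1 (hg x)
      simp [relabelAux, hi]
    · simp [relabelAux]
  induction φ with
  | falsum => rfl
  | equal => simp [relabel, mapTermRel, Term.varFinsetLeft_relabel_eq_empty (hg' _)]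
  | rel =>
    simp [relabel, mapTermRel, Term.varFinsetLeft_relabel_eq_empty (hg' _),
      Finset.eq_empty_iff_forall_notMem]
  | imp _ _ ih₁ ih₂ => simp [ih₁, ih₂]
  | all _ ih => simp [ih]

@[simp]
theorem freeVarFinset_alls : ∀ {k : ℕ} (φ : L.BoundedFormula α k),
    φ.alls.freeVarFinset = φ.freeVarFinset
  | 0, _ => rfl
  | _ + 1, φ => freeVarFinset_alls φ.all

@[simp]
theorem freeVarFinset_inf {k : ℕ} (φ ψ : L.BoundedFormula α k) :
    (φ ⊓ ψ).freeVarFinset = φ.freeVarFinset ∪ ψ.freeVarFinset := by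
  simp [min, BoundedFormula.not]

theorem mem_freeVarFinset_foldr_inf {k : ℕ} (l : List (L.BoundedFormula α k)) (a : α) :
    a ∈ (l.foldr (· ⊓ ·) ⊤).freeVarFinset ↔ ∃ φ ∈ l, a ∈ φ.freeVarFinset := by
  induction l with
  | nil => simp [Top.top, BoundedFormula.not]
  | cons φ l ih => simp [ih]

@[simp]
theorem mem_freeVarFinset_iInf {k : ℕ} [Finite β] (f : β → L.BoundedFormula α k) (a : α) :
    a ∈ (iInf f).freeVarFinset ↔ ∃ b, a ∈ (f b).freeVarFinset := by
  simp [iInf, mem_freeVarFinset_foldr_inf]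

end BoundedFormula

end FirstOrder.Language

namespace LFD

open FirstOrder Language BoundedFormula

section Translation

variable {Pred : Type} {ar : Pred → ℕ} {n m : ℕ}

theorem sat_dep_iff_forall_pair {V O : Type} (M : DepModel V Pred ar O) {s : V → O}
    (hs : s ∈ M.A) (X : Finset V) (y : V) :
    Sat M (.dep X y) s ↔
      ∀ t u, t ∈ M.A → agree (↑X) s t → u ∈ M.A → agree (↑X) s u → t y = u y :=
  ⟨fun h t u ht hst hu hsu => (h t ht hst).symm.trans (h u hu hsu),
    fun h t ht hst => h s t hs (fun _ _ => rfl) ht hst⟩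

/- A map `e : Fin n → Fin m` into the bound variables names a second assignment `t = xs ∘ e`
next to the free assignment `v`; `guardAt e X` expresses `t ∈ A₀ ∧ v =_X t`. -/

def admissibleAt (e : Fin n → Fin m) : (Lang Pred ar n).BoundedFormula (Fin n) m :=
  Relations.boundedFormula (Sum.inr ⟨rfl⟩) fun i => Term.var (Sum.inr (e i))

noncomputable def agreesAt (e : Fin n → Fin m) (X : Finset (Fin n)) :
    (Lang Pred ar n).BoundedFormula (Fin n) m :=
  iInf fun x : X => (Term.var (Sum.inl x.1)).bdEqual (Term.var (Sum.inr (e x.1)))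

noncomputable def guardAt (e : Fin n → Fin m) (X : Finset (Fin n)) :
    (Lang Pred ar n).BoundedFormula (Fin n) m :=
  admissibleAt e ⊓ agreesAt e X

@[simp]
theorem freeVarFinset_guardAt (e : Fin n → Fin m) (X : Finset (Fin n)) :
    (guardAt (Pred := Pred) (ar := ar) e X).freeVarFinset = X := by
  ext x
  simp [guardAt, admissibleAt, agreesAt, Relations.boundedFormula, Term.bdEqual]

variable {O : Type} (M : DepModel (Fin n) Pred ar O)

theorem realize_admissibleAt (e : Fin n → Fin m) (v : Fin n → O) (xs : Fin m → O) :
    (letI := TStr M; (admissibleAt (Pred := Pred) (ar := ar) e).Realize v xs) ↔ xs ∘ e ∈ M.A :=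
  ⟨fun ⟨_, hs, h⟩ => (funext h : xs ∘ e = _) ▸ hs, fun h => ⟨_, h, fun _ => rfl⟩⟩

@[simp]
theorem realize_guardAt (e : Fin n → Fin m) (X : Finset (Fin n)) (v : Fin n → O)
    (xs : Fin m → O) :
    (letI := TStr M; (guardAt (Pred := Pred) (ar := ar) e X).Realize v xs) ↔
      xs ∘ e ∈ M.A ∧ agree (↑X) v (xs ∘ e) := by
  let _ := TStr M
  simp [guardAt, agreesAt, agree, realize_admissibleAt, Function.comp_def]

/- `D_X y` quantifies over two admissible assignments agreeing with `s` on `X` rather than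
comparing one of them with `s` itself, so that `y` does not occur free. -/
noncomputable def tr : Formula (Fin n) Pred ar → (Lang Pred ar n).Formula (Fin n)
  | .atom P x => Relations.formula (Sum.inl ⟨P, rfl⟩) fun i => Term.var (x i)
  | .neg φ => (tr φ).not
  | .conj φ ψ => tr φ ⊓ tr ψ
  | .dd X φ => alls ((guardAt id X).imp (relabel Sum.inr (tr φ)))
  | .dep X y => alls ((guardAt (Fin.castAdd n) X ⊓ guardAt (Fin.natAdd n) X).imp
      ((Term.var (Sum.inr (Fin.castAdd n y))).bdEqual (Term.var (Sum.inr (Fin.natAdd n y)))))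

theorem freeVarFinset_tr (φ : Formula (Fin n) Pred ar) : (tr φ).freeVarFinset = Free φ := by
  induction φ with
  | atom =>
    ext
    simp [tr, Free, Relations.formula, Relations.boundedFormula, eq_comm]
  | neg φ ih => simp [tr, Free, Formula.not, BoundedFormula.not, ih]
  | conj φ ψ ih₁ ih₂ => simp [tr, Free, ih₁, ih₂]
  | dd => simp [tr, Free, freeVarFinset_relabel_eq_empty (g := Sum.inr) fun _ => rfl]
  | dep => simp [tr, Free, Term.bdEqual]

theorem sat_iff_realize_tr (φ : Formula (Fin n) Pred ar) {s : Fin n → O} (hs : s ∈ M.A) :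
    Sat M φ s ↔ letI := TStr M; (tr φ).Realize s := by
  let _ := TStr M
  induction φ generalizing s with
  | atom => rfl
  | neg φ ih => simp [Sat, tr, ih hs]
  | conj φ ψ ih₁ ih₂ => simp [Sat, tr, ih₁ hs, ih₂ hs]
  | dd X φ ih =>
    simp only [Sat, tr, realize_alls, realize_imp, realize_guardAt,
      realize_relabel_sumInr_formula, Function.comp_id, and_imp]
    exact forall₂_congr fun t ht => imp_congr_right fun _ => ih ht
  | dep X y =>
    rw [sat_dep_iff_forall_pair M hs]
    simp only [tr, realize_alls, realize_imp, realize_inf, realize_guardAt,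
      realize_bdEqual, Term.realize_var, Sum.elim_inr, and_imp]
    rw [← (Fin.appendEquiv n n).forall_congr_right]
    simp only [Fin.appendEquiv_apply, Function.comp_def, Fin.append_left, Fin.append_right,
      Prod.forall]

end Translation

/-- First-order translation: there is a map `tr` from LFD formulas over the finite set
of variables `V = Fin n` to first-order formulas of `Lang` with free variables among `V`
such that (i) the free variables of `tr(φ)` are exactly `Free(φ)`, and (ii) for every
dependence model `M` and admissible assignment `s`, `M, s ⊨ φ` iff `tr(φ)` is true in
the associated structure `T(M)` under the variable assignment `s`. -/
theorem stmt7 (Pred : Type) (ar : Pred → ℕ) (n : ℕ) :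
    ∃ tr : Formula (Fin n) Pred ar → (Lang Pred ar n).Formula (Fin n),
      (∀ φ, (tr φ).freeVarFinset = Free φ) ∧
      (∀ (O : Type) (M : DepModel (Fin n) Pred ar O) (φ : Formula (Fin n) Pred ar)
        (s : Fin n → O), s ∈ M.A →
          (Sat M φ s ↔ letI := TStr M; (tr φ).Realize s)) :=
  ⟨tr, freeVarFinset_tr, fun _ M φ _ hs => sat_iff_realize_tr M φ hs⟩

end LFD
end

section
/- Every dependence model M = (O, I, A) induces a standard relational model rel(M) = (W, ∼, ‖·‖) with W = A, s ∼_x t iff s(x) = t(x), and ‖P x₁…x_n‖ = {s ∈ A : (s(x₁),…,s(x_n)) ∈ I(P)}; these data satisfy the conditions on standard relational models, and the two semantics agree: for every s ∈ A and every LFD formula φ, M, s ⊨ φ (dependence-model semantics) iff rel(M), s ⊨ φ (relational semantics). -/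
namespace LFD

/-- Data of a relational model: for each variable a binary relation on worlds, and a
valuation for atomic formulas `P x₁…x_n`. -/
structure RelModel (V Pred : Type) (ar : Pred → ℕ) (W : Type) where
  rel : V → W → W → Prop
  val : (P : Pred) → (Fin (ar P) → V) → Set W

variable {V Pred O W : Type} {ar : Pred → ℕ}

/-- `∼_X` : the intersection `⋂_{x ∈ X} ∼_x` (the universal relation for `X = ∅`). -/
def RelModel.relSet (N : RelModel V Pred ar W) (X : Set V) (w v : W) : Prop :=
  ∀ x ∈ X, N.rel x w v

/-- The conditions on a *standard* relational model: each `∼_x` is an equivalence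
relation, and the valuation is coherent: if `w ∼_X v`, all variables of the atom are in
`X`, and `w ∈ ‖P x₁…x_n‖`, then `v ∈ ‖P x₁…x_n‖`. -/
def IsStandard (N : RelModel V Pred ar W) : Prop :=
  (∀ x : V, Equivalence (N.rel x)) ∧
  (∀ (X : Set V) (P : Pred) (xs : Fin (ar P) → V) (w v : W),
    N.relSet X w v → (∀ i, xs i ∈ X) → w ∈ N.val P xs → v ∈ N.val P xs)

/-- Relational semantics for LFD formulas on a relational model. -/
def RSat (N : RelModel V Pred ar W) : Formula V Pred ar → W → Prop
  | .atom P xs, w => w ∈ N.val P xs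
  | .neg φ, w => ¬ RSat N φ w
  | .conj φ ψ, w => RSat N φ w ∧ RSat N ψ w
  | .dd X φ, w => ∀ v : W, N.relSet (↑X) w v → RSat N φ v
  | .dep X y, w => ∀ v : W, N.relSet (↑X) w v → N.rel y w v

def DepModel.toRelModel (M : DepModel V Pred ar O) : RelModel V Pred ar ↥M.A where
  rel x s t := s.1 x = t.1 x
  val P xs := {s : ↥M.A | (fun i => s.1 (xs i)) ∈ M.I P}

namespace DepModel

variable (M : DepModel V Pred ar O)

theorem relSet_toRelModel_iff {X : Set V} {s t : ↥M.A} :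
    M.toRelModel.relSet X s t ↔ agree X s.1 t.1 :=
  Iff.rfl

theorem isStandard_toRelModel : IsStandard M.toRelModel := by
  refine ⟨fun x => eq_equivalence.comap fun s : ↥M.A => s.1 x, ?_⟩
  intro X P xs s t hst hxs hs
  have htuple : (fun i => s.1 (xs i)) = fun i => t.1 (xs i) := funext fun i => hst _ (hxs i)
  change (fun i => t.1 (xs i)) ∈ M.I P
  exact htuple ▸ hs

theorem sat_iff_rSat_toRelModel (φ : Formula V Pred ar) (s : ↥M.A) :
    Sat M φ s.1 ↔ RSat M.toRelModel φ s := by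
  induction φ generalizing s with
  | atom P xs => exact Iff.rfl
  | neg φ ih => exact (ih s).not
  | conj φ ψ ihφ ihψ => exact (ihφ s).and (ihψ s)
  | dd X φ ih =>
    simp only [Sat, RSat, relSet_toRelModel_iff, Subtype.forall, ← ih]
  | dep X y =>
    simp only [Sat, RSat, relSet_toRelModel_iff, Subtype.forall]
    rfl

end DepModel

/-- Every dependence model `M` induces a standard relational model `rel(M)` on the set
of worlds `W = A`, with `s ∼_x t` iff `s(x) = t(x)` and the valuation induced by `I`;
and the two semantics agree on it. -/
theorem stmt8 (M : DepModel V Pred ar O) :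
    letI N : RelModel V Pred ar (↥M.A) :=
      { rel := fun x s t => s.1 x = t.1 x
        val := fun P xs => {s : ↥M.A | (fun i => s.1 (xs i)) ∈ M.I P} }
    IsStandard N ∧
      ∀ (s : ↥M.A) (φ : Formula V Pred ar), Sat M φ s.1 ↔ RSat N φ s :=
  ⟨M.isStandard_toRelModel, fun s φ => M.sat_iff_rSat_toRelModel φ s⟩

end LFD
end

section
/- Every standard relational model 𝓜 = (W, ∼, ‖·‖) induces a dependence model dep(𝓜) = (O^∼, I^∼, A^∼), where O^∼ = {(x, [w]_x) : w ∈ W, x ∈ V} (with [w]_x the ∼_x-equivalence class of w), A^∼ = {w^∼ : w ∈ W} with w^∼(x) = (x, [w]_x), and I^∼(P) = {((x₁,[w]_{x₁}),…,(x_n,[w]_{x_n})) : w ∈ W, x₁,…,x_n ∈ V, w ∈ ‖P x₁…x_n‖}; this interpretation is well defined, and the two semantics agree: for every w ∈ W and LFD formula φ, 𝓜, w ⊨ φ (relational semantics) iff dep(𝓜), w^∼ ⊨ φ (dependence-model semantics). -/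
namespace LFD

variable {V Pred O W : Type} {ar : Pred → ℕ}

/-- The assignment `w^∼` induced by a world `w`: `w^∼(x) = (x, [w]_x)`, where `[w]_x` is
the `∼_x`-equivalence class of `w` (encoded as a set of worlds). -/
def worldAsn (N : RelModel V Pred ar W) (w : W) : V → V × Set W :=
  fun x => (x, {v : W | N.rel x w v})

theorem _root_.Equivalence.setOf_eq_setOf_iff {α : Type*} {r : α → α → Prop}
    (hr : Equivalence r) {a b : α} : {c | r a c} = {c | r b c} ↔ r a b := by
  refine ⟨fun h => ?_, fun hab => Set.ext fun c => ⟨hr.trans (hr.symm hab), hr.trans hab⟩⟩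
  have hb : b ∈ {c | r b c} := hr.refl b
  rwa [← h] at hb

section Standard

variable {N : RelModel V Pred ar W}

theorem worldAsn_eq_worldAsn_iff {x : V} (hx : Equivalence (N.rel x)) {w v : W} :
    worldAsn N w x = worldAsn N v x ↔ N.rel x w v := by
  simp only [worldAsn, Prod.mk.injEq, true_and]
  exact hx.setOf_eq_setOf_iff

theorem agree_worldAsn_iff (hN : ∀ x, Equivalence (N.rel x)) {X : Set V} {w v : W} :
    agree X (worldAsn N w) (worldAsn N v) ↔ N.relSet X w v :=
  forall₂_congr fun x _ => worldAsn_eq_worldAsn_iff (hN x)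

variable (N) in
/-- The dependence model `dep(𝓜) = (O^∼, I^∼, A^∼)` induced by a relational model. -/
def depModel : DepModel V Pred ar (V × Set W) where
  I P := {o | ∃ (w : W) (xs : Fin (ar P) → V),
    w ∈ N.val P xs ∧ ∀ i, o i = (xs i, {v : W | N.rel (xs i) w v})}
  A := {s | ∃ w : W, s = worldAsn N w}

/-- A witness `w' ∈ ‖P xs'‖` for `w^∼ ∘ xs ∈ I^∼(P)` must have `xs' = xs` and `w' ∼_{xs} w`,
so coherence of the valuation gives `w ∈ ‖P xs‖`: this is why `I^∼` is well defined. -/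
theorem worldAsn_comp_mem_depModel_I_iff (hN : IsStandard N) {w : W} {P : Pred}
    {xs : Fin (ar P) → V} :
    (fun i => worldAsn N w (xs i)) ∈ (depModel N).I P ↔ w ∈ N.val P xs := by
  refine ⟨?_, fun h => ⟨w, xs, h, fun _ => rfl⟩⟩
  rintro ⟨w', xs', hw', hxs'⟩
  obtain rfl : xs = xs' := funext fun i => congrArg Prod.fst (hxs' i)
  have hrel : N.relSet (Set.range xs) w' w := by
    rintro _ ⟨i, rfl⟩
    exact (hN.1 (xs i)).symm ((worldAsn_eq_worldAsn_iff (hN.1 _)).1 (hxs' i))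
  exact hN.2 _ P xs w' w hrel Set.mem_range_self hw'

theorem rsat_iff_sat_depModel (hN : IsStandard N) (w : W) (φ : Formula V Pred ar) :
    RSat N φ w ↔ Sat (depModel N) φ (worldAsn N w) := by
  induction φ generalizing w with
  | atom P xs => exact (worldAsn_comp_mem_depModel_I_iff hN).symm
  | neg φ ih => exact not_congr (ih w)
  | conj φ ψ ihφ ihψ => exact and_congr (ihφ w) (ihψ w)
  | dd X φ ih =>
    refine ⟨?_, fun h v hwv => (ih v).2 (h _ ⟨v, rfl⟩ ((agree_worldAsn_iff hN.1).2 hwv))⟩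
    rintro h _ ⟨v, rfl⟩ hwv
    exact (ih v).1 (h v ((agree_worldAsn_iff hN.1).1 hwv))
  | dep X y =>
    refine ⟨?_, fun h v hwv => (worldAsn_eq_worldAsn_iff (hN.1 y)).1
      (h _ ⟨v, rfl⟩ ((agree_worldAsn_iff hN.1).2 hwv))⟩
    rintro h _ ⟨v, rfl⟩ hwv
    exact (worldAsn_eq_worldAsn_iff (hN.1 y)).2 (h v ((agree_worldAsn_iff hN.1).1 hwv))

end Standard

/-- Every standard relational model `𝓜` induces a dependence model `dep(𝓜)` with
objects `O^∼ = {(x, [w]_x)}`, admissible assignments `A^∼ = {w^∼ : w ∈ W}` and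
interpretation `I^∼(P) = {((x₁,[w]_{x₁}),…,(x_n,[w]_{x_n})) : w ∈ ‖P x₁…x_n‖}`,
and the two semantics agree: `𝓜, w ⊨ φ` iff `dep(𝓜), w^∼ ⊨ φ`. -/
theorem stmt9 (N : RelModel V Pred ar W) (hN : IsStandard N) :
    letI M : DepModel V Pred ar (V × Set W) :=
      { I := fun P => {o | ∃ (w : W) (xs : Fin (ar P) → V),
          w ∈ N.val P xs ∧ ∀ i, o i = (xs i, {v : W | N.rel (xs i) w v})}
        A := {s | ∃ w : W, s = worldAsn N w} }
    ∀ (w : W) (φ : Formula V Pred ar), RSat N φ w ↔ Sat M φ (worldAsn N w) :=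
  fun w φ => rsat_iff_sat_depModel hN w φ

end LFD
end

section
/- For every dependence model M = (O, I, A) and every assignment s ∈ A, the Φ-type type(s) = {ψ ∈ Φ : M, s ⊨ ψ} is a Hintikka set for Φ. Moreover, the set type(A) = {type(s) : s ∈ A} of all Φ-types realized in M is a type model for Φ. -/
namespace LFD

variable {V Pred O : Type} {ar : Pred → ℕ}

/-- All variables occurring in a formula (including those in the subscripts). -/
def vars [DecidableEq V] : Formula V Pred ar → Finset V
  | .atom _ x => Finset.univ.image x
  | .neg φ => vars φ
  | .conj φ ψ => vars φ ∪ vars ψ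
  | .dd X φ => X ∪ vars φ
  | .dep X y => insert y X

/-- The set of subformulas of a formula (including the formula itself). -/
def Subf : Formula V Pred ar → Set (Formula V Pred ar)
  | .atom P x => {Formula.atom P x}
  | .neg φ => insert (Formula.neg φ) (Subf φ)
  | .conj φ ψ => insert (Formula.conj φ ψ) (Subf φ ∪ Subf ψ)
  | .dd X φ => insert (Formula.dd X φ) (Subf φ)
  | .dep X y => {Formula.dep X y}

/-- `V_F`: the set of all variables occurring in the set of formulas `F`. -/
def VF [DecidableEq V] (F : Set (Formula V Pred ar)) : Set V :=
  ⋃ φ ∈ F, ↑(vars φ)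

/-- `Φ_F`: add to `F` all dependence atoms `D_X y` for `X, {y} ⊆ V_F`, close under
subformulas, and add one round of negations (leaving explicit negations as they are). -/
def Phi [DecidableEq V] (F : Set (Formula V Pred ar)) : Set (Formula V Pred ar) :=
  let S : Set (Formula V Pred ar) :=
    (⋃ φ ∈ F, Subf φ) ∪
      {f | ∃ (X : Finset V) (y : V), ↑X ⊆ VF F ∧ y ∈ VF F ∧ f = Formula.dep X y}
  S ∪ {f | ∃ ψ ∈ S, (¬ ∃ θ, ψ = Formula.neg θ) ∧ f = Formula.neg ψ}

/-- The dependence closure of `X` with respect to a set `Sg` of formulas: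
`D_X^Sg = {y : D_X y ∈ Sg}`. -/
def depClos (Sg : Set (Formula V Pred ar)) (X : Finset V) : Set V :=
  {y | Formula.dep X y ∈ Sg}

/-- A Hintikka set for `Φ` (with all formulas mentioned ranging over `Φ` only). -/
structure IsHintikka [DecidableEq V] (Φ : Set (Formula V Pred ar))
    (Sg : Set (Formula V Pred ar)) : Prop where
  subset : Sg ⊆ Φ
  negIff : ∀ ψ, Formula.neg ψ ∈ Φ → (Formula.neg ψ ∈ Sg ↔ ψ ∉ Sg)
  conjIff : ∀ φ ψ, Formula.conj φ ψ ∈ Φ → (Formula.conj φ ψ ∈ Sg ↔ φ ∈ Sg ∧ ψ ∈ Sg)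
  ddElim : ∀ (X : Finset V) (ψ : Formula V Pred ar), Formula.dd X ψ ∈ Sg → ψ ∈ Sg
  proj : ∀ (X : Finset V) (x : V), x ∈ X → Formula.dep X x ∈ Φ → Formula.dep X x ∈ Sg
  trans : ∀ (X Y : Finset V) (z : V), (∀ y ∈ Y, Formula.dep X y ∈ Sg) →
    Formula.dep Y z ∈ Sg → Formula.dep X z ∈ Φ → Formula.dep X z ∈ Sg

/-- `Sg ∼_X Δ` : `Sg` and `Δ` contain the same formulas `ψ ∈ Φ` with
`Free(ψ) ⊆ D_X^Sg`. -/
def simX [DecidableEq V] (Φ Sg Δ : Set (Formula V Pred ar)) (X : Finset V) : Prop :=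
  ∀ ψ ∈ Φ, ↑(Free ψ) ⊆ depClos Sg X → (ψ ∈ Sg ↔ ψ ∈ Δ)

/-- A type model for `Φ`: a family of Hintikka sets for `Φ` satisfying the witness
condition (f) for dependence modalities and the uniformity condition (g) for constants. -/
structure IsTypeModel [DecidableEq V] (Φ : Set (Formula V Pred ar))
    (Mf : Set (Set (Formula V Pred ar))) : Prop where
  hintikka : ∀ Sg ∈ Mf, IsHintikka Φ Sg
  witness : ∀ Sg ∈ Mf, ∀ (X : Finset V) (ψ : Formula V Pred ar),
    Formula.dd X ψ ∈ Φ → Formula.dd X ψ ∉ Sg →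
      ∃ Δ ∈ Mf, ψ ∉ Δ ∧ simX Φ Sg Δ X
  constants : ∀ Sg ∈ Mf, ∀ Δ ∈ Mf, simX Φ Sg Δ ∅

/-- The `Φ`-type of an assignment `s` in a dependence model `M`. -/
def typeOf [DecidableEq V] (Φ : Set (Formula V Pred ar)) (M : DepModel V Pred ar O)
    (s : V → O) : Set (Formula V Pred ar) :=
  {ψ ∈ Φ | Sat M ψ s}

end LFD

/-! Truth of a formula at an admissible assignment only depends on the values of its free
variables. Since `D_X y` holds at `s` exactly when every `t ∈ A` with `s =_X t` has
`t y = s y`, two assignments that agree on `X` agree on the whole dependence closure of `X`,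
and hence on the truth of every formula whose free variables lie in it: this gives both the
witness condition (f) and, for `X = ∅`, the condition (g). The Hintikka conditions are
immediate from the truth definition, using only that `Φ_F` is closed under subformulas. -/

namespace LFD

variable {V Pred O : Type} {ar : Pred → ℕ}

section Subformulas

lemma mem_Subf_self (φ : Formula V Pred ar) : φ ∈ Subf φ := by
  cases φ <;> simp [Subf]

lemma Subf_subset_of_mem {θ φ : Formula V Pred ar} (h : θ ∈ Subf φ) : Subf θ ⊆ Subf φ := by
  induction φ with
  | atom P x | dep X y =>
    obtain rfl : θ = _ := h
    exact subset_rfl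
  | neg φ ih | dd X φ ih =>
    rcases h with rfl | h
    · exact subset_rfl
    · exact (ih h).trans (Set.subset_insert _ _)
  | conj φ ψ ihφ ihψ =>
    rcases h with rfl | h | h
    · exact subset_rfl
    · exact (ihφ h).trans (Set.subset_union_left.trans (Set.subset_insert _ _))
    · exact (ihψ h).trans (Set.subset_union_right.trans (Set.subset_insert _ _))

def SubfClosed (Φ : Set (Formula V Pred ar)) : Prop :=
  ∀ θ ∈ Φ, Subf θ ⊆ Φ

variable {Φ : Set (Formula V Pred ar)}

lemma SubfClosed.mem_of_neg_mem (hΦ : SubfClosed Φ) {ψ : Formula V Pred ar}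
    (h : Formula.neg ψ ∈ Φ) : ψ ∈ Φ :=
  hΦ _ h (Or.inr (mem_Subf_self ψ))

lemma SubfClosed.mem_of_conj_mem (hΦ : SubfClosed Φ) {φ ψ : Formula V Pred ar}
    (h : Formula.conj φ ψ ∈ Φ) : φ ∈ Φ ∧ ψ ∈ Φ :=
  ⟨hΦ _ h (Or.inr (Or.inl (mem_Subf_self φ))), hΦ _ h (Or.inr (Or.inr (mem_Subf_self ψ)))⟩

lemma SubfClosed.mem_of_dd_mem (hΦ : SubfClosed Φ) {X : Finset V} {ψ : Formula V Pred ar}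
    (h : Formula.dd X ψ ∈ Φ) : ψ ∈ Φ :=
  hΦ _ h (Or.inr (mem_Subf_self ψ))

/-- The part of `Φ_F` before the round of negations is added. -/
def PhiCore [DecidableEq V] (F : Set (Formula V Pred ar)) : Set (Formula V Pred ar) :=
  (⋃ φ ∈ F, Subf φ) ∪
    {f | ∃ (X : Finset V) (y : V), ↑X ⊆ VF F ∧ y ∈ VF F ∧ f = Formula.dep X y}

lemma subfClosed_PhiCore [DecidableEq V] (F : Set (Formula V Pred ar)) :
    SubfClosed (PhiCore F) := by
  rintro θ (hθ | ⟨X, y, hX, hy, rfl⟩) ψ hψ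
  · obtain ⟨φ, hφ, hθφ⟩ := Set.mem_iUnion₂.mp hθ
    exact Or.inl (Set.mem_iUnion₂.mpr ⟨φ, hφ, Subf_subset_of_mem hθφ hψ⟩)
  · obtain rfl : ψ = _ := hψ
    exact Or.inr ⟨X, y, hX, hy, rfl⟩

lemma subfClosed_Phi [DecidableEq V] (F : Set (Formula V Pred ar)) :
    SubfClosed (Phi F) := by
  have hcore : PhiCore F ⊆ Phi F := Set.subset_union_left
  rintro θ (hθ | ⟨ψ, hψ, hnotneg, rfl⟩)
  · exact (subfClosed_PhiCore F θ hθ).trans hcore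
  · exact Set.insert_subset (Or.inr ⟨ψ, hψ, hnotneg, rfl⟩)
      ((subfClosed_PhiCore F ψ hψ).trans hcore)

end Subformulas

section Types

lemma agree_comm {X : Set V} {s t : V → O} : agree X s t ↔ agree X t s :=
  ⟨fun h x hx => (h x hx).symm, fun h x hx => (h x hx).symm⟩

lemma agree.trans {X : Set V} {s t u : V → O} (hst : agree X s t) (htu : agree X t u) :
    agree X s u :=
  fun x hx => (hst x hx).trans (htu x hx)

variable [DecidableEq V] (M : DepModel V Pred ar O)

lemma sat_iff_of_agree_free {s t : V → O} (hs : s ∈ M.A) (ht : t ∈ M.A) :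
    ∀ θ : Formula V Pred ar, agree (↑(Free θ)) s t → (Sat M θ s ↔ Sat M θ t)
  | .atom P x, hst => by
    have : (fun i => s (x i)) = fun i => t (x i) :=
      funext fun i => hst (x i) (by simp [Free])
    simp only [Sat, this]
  | .neg φ, hst => not_congr (sat_iff_of_agree_free hs ht φ hst)
  | .conj φ ψ, hst => by
    simp only [Free, Finset.coe_union] at hst
    exact and_congr (sat_iff_of_agree_free hs ht φ fun y hy => hst y (Or.inl hy))
      (sat_iff_of_agree_free hs ht ψ fun y hy => hst y (Or.inr hy))
  | .dd Y φ, (hst : agree (↑Y) s t) =>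
    forall₂_congr fun u _ =>
      imp_congr_left ⟨(agree_comm.mp hst).trans, hst.trans⟩
  | .dep Y z, (hst : agree (↑Y) s t) => by
    have hts := agree_comm.mp hst
    constructor
    · intro h u hu htu
      rw [← h t ht hst]
      exact h u hu (hst.trans htu)
    · intro h u hu hsu
      rw [← h s hs hts]
      exact h u hu (hts.trans hsu)

variable (Φ : Set (Formula V Pred ar))

lemma simX_typeOf_of_agree {s t : V → O} (hs : s ∈ M.A) (ht : t ∈ M.A) {X : Finset V}
    (hst : agree (↑X) s t) : simX Φ (typeOf Φ M s) (typeOf Φ M t) X := by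
  intro θ hθ hfree
  have hθst : agree (↑(Free θ)) s t := fun y hy => (hfree hy).2 t ht hst
  exact and_congr_right' (sat_iff_of_agree_free M hs ht θ hθst)

variable {Φ}

lemma isHintikka_typeOf (hΦ : SubfClosed Φ) {s : V → O} (hs : s ∈ M.A) :
    IsHintikka Φ (typeOf Φ M s) where
  subset _ h := h.1
  negIff _ hneg :=
    ⟨fun h hψ => h.2 hψ.2, fun h => ⟨hneg, fun hψ => h ⟨hΦ.mem_of_neg_mem hneg, hψ⟩⟩⟩
  conjIff _ _ hconj :=
    ⟨fun h => ⟨⟨(hΦ.mem_of_conj_mem hconj).1, h.2.1⟩, ⟨(hΦ.mem_of_conj_mem hconj).2, h.2.2⟩⟩,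
      fun ⟨hφ, hψ⟩ => ⟨hconj, hφ.2, hψ.2⟩⟩
  ddElim _ _ h := ⟨hΦ.mem_of_dd_mem h.1, h.2 s hs fun _ _ => rfl⟩
  proj _ x hx hmem := ⟨hmem, fun _ _ hst => hst x hx⟩
  trans _ _ _ hXY hYz hmem := ⟨hmem, fun t ht hst => hYz.2 t ht fun y hy => (hXY y hy).2 t ht hst⟩

lemma isTypeModel_realizedTypes (hΦ : SubfClosed Φ) :
    IsTypeModel Φ {T | ∃ s ∈ M.A, T = typeOf Φ M s} where
  hintikka := by
    rintro _ ⟨s, hs, rfl⟩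
    exact isHintikka_typeOf M hΦ hs
  witness := by
    rintro _ ⟨s, hs, rfl⟩ X ψ hmem hnot
    have hfalse : ¬ Sat M (Formula.dd X ψ) s := fun h => hnot ⟨hmem, h⟩
    simp only [Sat, not_forall] at hfalse
    obtain ⟨t, ht, hst, hψ⟩ := hfalse
    exact ⟨typeOf Φ M t, ⟨t, ht, rfl⟩, fun h => hψ h.2, simX_typeOf_of_agree M Φ hs ht hst⟩
  constants := by
    rintro _ ⟨s, hs, rfl⟩ _ ⟨t, ht, rfl⟩
    exact simX_typeOf_of_agree M Φ hs ht fun _ h => absurd h (Finset.notMem_empty _)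

end Types

end LFD

open LFD

theorem stmt10_general {V Pred O : Type} [DecidableEq V] {ar : Pred → ℕ}
    (F : Set (Formula V Pred ar)) (M : DepModel V Pred ar O) :
    (∀ s ∈ M.A, IsHintikka (Phi F) (typeOf (Phi F) M s)) ∧
    IsTypeModel (Phi F) {T | ∃ s ∈ M.A, T = typeOf (Phi F) M s} :=
  ⟨fun _ hs => isHintikka_typeOf M (subfClosed_Phi F) hs,
    isTypeModel_realizedTypes M (subfClosed_Phi F)⟩

/-- For every dependence model `M` and admissible assignment `s ∈ A`, the `Φ_F`-type of
`s` is a Hintikka set for `Φ_F`; moreover, the set of all `Φ_F`-types realized in `M` is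
a type model for `Φ_F`. -/
theorem stmt10 {V Pred O : Type} [DecidableEq V] {ar : Pred → ℕ}
    (F : Set (Formula V Pred ar)) (hF : F.Finite) (M : DepModel V Pred ar O) :
    (∀ s ∈ M.A, IsHintikka (Phi F) (typeOf (Phi F) M s)) ∧
    IsTypeModel (Phi F) {T | ∃ s ∈ M.A, T = typeOf (Phi F) M s} :=
  stmt10_general F M
end

section
/- (Completeness) The Hilbert system LFD is sound and complete for dependence models: an LFD formula φ is provable in the system LFD iff φ is true at every admissible assignment of every dependence model. -/
namespace LFD

variable {V Pred : Type} {ar : Pred → ℕ}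

/-- Material implication `φ → ψ`, defined classically as `¬(φ ∧ ¬ψ)`. -/
def impl (φ ψ : Formula V Pred ar) : Formula V Pred ar :=
  Formula.neg (Formula.conj φ (Formula.neg ψ))

/-- The conjunction `D_X Y ∧ θ`, i.e. the premises `D_X y` (for `y ∈ Y`) conjoined in
front of `θ` (just `θ` if `Y = ∅`); `D_X Y` abbreviates the conjunction of the atoms
`D_X y` for `y ∈ Y`. -/
noncomputable def depPrem (X Y : Finset V) (θ : Formula V Pred ar) : Formula V Pred ar :=
  (Y.toList.map (fun y => Formula.dep X y)).foldr Formula.conj θ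

/-- The Hilbert proof system **LFD**: classical propositional logic (all substitution
instances of propositional tautologies, plus modus ponens), 𝔻-Necessitation,
𝔻-Distribution, 𝔻-Introduction (for `Free(φ) ⊆ X`), 𝔻-Elimination, Projection,
Transitivity `(D_X Y ∧ D_Y Z) → D_X Z` (stated for each `z ∈ Z`), and Transfer
`(D_X Y ∧ 𝔻_Y φ) → 𝔻_X φ`. -/
inductive Provable [DecidableEq V] : Formula V Pred ar → Prop where
  /-- all substitution instances of classical propositional tautologies -/
  | taut (φ : Formula V Pred ar)
      (h : ∀ v : Formula V Pred ar → Bool,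
        (∀ ψ, v (Formula.neg ψ) = !(v ψ)) →
        (∀ ψ χ, v (Formula.conj ψ χ) = (v ψ && v χ)) → v φ = true) :
      Provable φ
  /-- modus ponens -/
  | mp {φ ψ : Formula V Pred ar} : Provable (impl φ ψ) → Provable φ → Provable ψ
  /-- 𝔻-Necessitation -/
  | nec (X : Finset V) {φ : Formula V Pred ar} : Provable φ → Provable (Formula.dd X φ)
  /-- 𝔻-Distribution -/
  | distr (X : Finset V) (φ ψ : Formula V Pred ar) :
      Provable (impl (Formula.dd X (impl φ ψ))
        (impl (Formula.dd X φ) (Formula.dd X ψ)))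
  /-- 𝔻-Introduction, provided `Free(φ) ⊆ X` -/
  | intro (X : Finset V) (φ : Formula V Pred ar) (h : Free φ ⊆ X) :
      Provable (impl φ (Formula.dd X φ))
  /-- 𝔻-Elimination -/
  | elim (X : Finset V) (φ : Formula V Pred ar) : Provable (impl (Formula.dd X φ) φ)
  /-- Projection: `D_X x` for `x ∈ X` -/
  | proj (X : Finset V) (x : V) (h : x ∈ X) : Provable (Formula.dep X x)
  /-- Transitivity: `(D_X Y ∧ D_Y z) → D_X z` -/
  | trans (X Y : Finset V) (z : V) :
      Provable (impl (depPrem X Y (Formula.dep Y z)) (Formula.dep X z))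
  /-- Transfer: `(D_X Y ∧ 𝔻_Y φ) → 𝔻_X φ` -/
  | transfer (X Y : Finset V) (φ : Formula V Pred ar) :
      Provable (impl (depPrem X Y (Formula.dd Y φ)) (Formula.dd X φ))

end LFD

namespace LFD

variable {V Pred : Type} {ar : Pred → ℕ}

def IsValuation (v : Formula V Pred ar → Bool) : Prop :=
  (∀ ψ, v (.neg ψ) = !v ψ) ∧ ∀ ψ χ, v (.conj ψ χ) = (v ψ && v χ)

namespace IsValuation

variable {v : Formula V Pred ar → Bool} (hv : IsValuation v)
include hv

theorem neg_eq_true {a : Formula V Pred ar} : v (.neg a) = true ↔ ¬v a = true := by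
  simp [hv.1]

theorem conj_eq_true {a b : Formula V Pred ar} :
    v (.conj a b) = true ↔ v a = true ∧ v b = true := by
  simp [hv.2]

theorem impl_eq_true {a b : Formula V Pred ar} :
    v (impl a b) = true ↔ (v a = true → v b = true) := by
  simp only [impl, hv.neg_eq_true, hv.conj_eq_true]
  tauto

theorem foldr_impl_eq_true (L : List (Formula V Pred ar)) (c : Formula V Pred ar) :
    v (L.foldr impl c) = true ↔ ((∀ a ∈ L, v a = true) → v c = true) := by
  induction L with
  | nil => simp
  | cons a L ih => simp only [List.foldr_cons, hv.impl_eq_true, ih, List.forall_mem_cons]; tauto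

end IsValuation

theorem foldr_conj_iff {p : Formula V Pred ar → Prop}
    (hp : ∀ a b, p (.conj a b) ↔ p a ∧ p b) (L : List (Formula V Pred ar))
    (θ : Formula V Pred ar) :
    p (L.foldr .conj θ) ↔ (∀ a ∈ L, p a) ∧ p θ := by
  induction L with
  | nil => simp
  | cons a L ih => simp only [List.foldr_cons, hp, ih, List.forall_mem_cons, and_assoc]

theorem depPrem_iff {p : Formula V Pred ar → Prop} (hp : ∀ a b, p (.conj a b) ↔ p a ∧ p b)
    (X Y : Finset V) (θ : Formula V Pred ar) :
    p (depPrem X Y θ) ↔ (∀ y ∈ Y, p (.dep X y)) ∧ p θ := by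
  simp [depPrem, foldr_conj_iff hp]

section Semantics

variable {O : Type} (M : DepModel V Pred ar O)

theorem exists_isValuation_sat (s : V → O) :
    ∃ v, IsValuation v ∧ ∀ ψ, v ψ = true ↔ Sat M ψ s := by
  classical
  refine ⟨fun ψ => decide (Sat M ψ s), ⟨fun ψ => ?_, fun ψ χ => ?_⟩,
    fun ψ => decide_eq_true_iff⟩
  · by_cases h : Sat M ψ s <;> simp [Sat, h]
  · by_cases h : Sat M ψ s <;> by_cases h' : Sat M χ s <;> simp [Sat, h, h']

theorem sat_impl {a b : Formula V Pred ar} {s : V → O} :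
    Sat M (impl a b) s ↔ (Sat M a s → Sat M b s) := by
  simp only [impl, Sat]
  tauto

theorem sat_depPrem {X Y : Finset V} {θ : Formula V Pred ar} {s : V → O} :
    Sat M (depPrem X Y θ) s ↔ (∀ y ∈ Y, Sat M (.dep X y) s) ∧ Sat M θ s :=
  depPrem_iff (p := fun a => Sat M a s) (fun _ _ => Iff.rfl) X Y θ

end Semantics

variable [DecidableEq V]

theorem Provable.of_taut_consequence {Φ : List (Formula V Pred ar)} {c : Formula V Pred ar}
    (hΦ : ∀ φ ∈ Φ, Provable φ)
    (h : ∀ v, IsValuation v → (∀ φ ∈ Φ, v φ = true) → v c = true) : Provable c := by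
  induction Φ generalizing c with
  | nil => exact .taut c fun v hn hc => h v ⟨hn, hc⟩ (by simp)
  | cons φ Φ ih =>
    rw [List.forall_mem_cons] at hΦ
    refine .mp (ih hΦ.2 fun v hv hΦv => hv.impl_eq_true.2 fun hφ => ?_) hΦ.1
    exact h v hv (List.forall_mem_cons.2 ⟨hφ, hΦv⟩)

theorem Provable.of_taut_consequence₂ {a b c : Formula V Pred ar} (ha : Provable a)
    (hb : Provable b) (h : ∀ v, IsValuation v → v a = true → v b = true → v c = true) :
    Provable c :=
  .of_taut_consequence (Φ := [a, b]) (by simp [ha, hb]) fun v hv hΦ =>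
    h v hv (hΦ a (by simp)) (hΦ b (by simp))

theorem provable_dd_foldr_impl (X : Finset V) (L : List (Formula V Pred ar))
    (ψ : Formula V Pred ar) :
    Provable (impl (.dd X (L.foldr impl ψ)) ((L.map (.dd X)).foldr impl (.dd X ψ))) := by
  induction L with
  | nil => exact .of_taut_consequence (Φ := []) (by simp) fun v hv _ => by simp [hv.impl_eq_true]
  | cons a L ih =>
    refine .of_taut_consequence₂ (.distr X a (L.foldr impl ψ)) ih fun v hv h₁ h₂ => ?_
    simp only [List.foldr_cons, List.map_cons, hv.impl_eq_true] at h₁ h₂ ⊢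
    tauto

section Soundness

variable {O : Type} (M : DepModel V Pred ar O)

theorem sat_congr_of_agree (a : Formula V Pred ar) {s t : V → O} (hs : s ∈ M.A) (ht : t ∈ M.A)
    (hst : agree (Free a) s t) : Sat M a s ↔ Sat M a t := by
  induction a with
  | atom P x =>
    have : (fun i => s (x i)) = fun i => t (x i) := funext fun i => hst (x i) (by simp [Free])
    simp only [Sat, this]
  | neg a ih => exact not_congr (ih hst)
  | conj a b iha ihb =>
    simp only [Free, Finset.coe_union] at hst
    exact and_congr (iha fun x hx => hst x (.inl hx)) (ihb fun x hx => hst x (.inr hx))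
  | dd X a =>
    exact forall₂_congr fun u _ => imp_congr_left
      ⟨fun h x hx => (hst x hx).symm.trans (h x hx), fun h x hx => (hst x hx).trans (h x hx)⟩
  | dep X y =>
    constructor
    · intro h u hu htu
      exact (h t ht hst).symm.trans (h u hu fun x hx => (hst x hx).trans (htu x hx))
    · intro h u hu hsu
      have htu : agree X t u := fun x hx => (hst x hx).symm.trans (hsu x hx)
      exact (h s hs fun x hx => (hst x hx).symm).symm.trans (h u hu htu)

theorem soundness {φ : Formula V Pred ar} (h : Provable φ) (s : V → O) (hs : s ∈ M.A) :
    Sat M φ s := by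
  induction h generalizing s with
  | taut φ h =>
    obtain ⟨v, hv, hvs⟩ := exists_isValuation_sat M s
    exact (hvs φ).1 (h v hv.1 hv.2)
  | mp _ _ ih₁ ih₂ => exact (sat_impl M).1 (ih₁ s hs) (ih₂ s hs)
  | nec X _ ih => exact fun t ht _ => ih t ht
  | distr X a b =>
    simp only [sat_impl]
    exact fun hab ha t ht hst => (sat_impl M).1 (hab t ht hst) (ha t ht hst)
  | intro X a hfree =>
    refine (sat_impl M).2 fun ha t ht hst => (sat_congr_of_agree M a hs ht ?_).1 ha
    exact fun x hx => hst x (hfree hx)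
  | elim X a => exact (sat_impl M).2 fun h => h s hs fun _ _ => rfl
  | proj X x hx => exact fun t _ hst => hst x hx
  | trans X Y z =>
    refine (sat_impl M).2 fun h => ?_
    obtain ⟨hXY, hYz⟩ := (sat_depPrem M).1 h
    exact fun t ht hst => hYz t ht fun y hy => hXY y hy t ht hst
  | transfer X Y a =>
    refine (sat_impl M).2 fun h => ?_
    obtain ⟨hXY, hYa⟩ := (sat_depPrem M).1 h
    exact fun t ht hst => hYa t ht fun y hy => hXY y hy t ht hst

end Soundness

section Consistency

def Entails (Γ : Set (Formula V Pred ar)) (χ : Formula V Pred ar) : Prop :=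
  ∃ L : List (Formula V Pred ar), (∀ a ∈ L, a ∈ Γ) ∧ Provable (L.foldr impl χ)

def Consistent (Γ : Set (Formula V Pred ar)) : Prop :=
  ¬∃ a, Entails Γ a ∧ Entails Γ (.neg a)

def MaximalConsistent (Γ : Set (Formula V Pred ar)) : Prop :=
  Maximal Consistent Γ

variable {Γ : Set (Formula V Pred ar)} {a b c : Formula V Pred ar}

theorem Entails.of_provable (h : Provable a) : Entails Γ a :=
  ⟨[], by simp, h⟩

theorem Entails.of_mem (h : a ∈ Γ) : Entails Γ a :=
  ⟨[a], by simpa, .of_taut_consequence (Φ := []) (by simp) fun v hv _ => by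
    simp [hv.impl_eq_true]⟩

theorem Entails.of_taut_consequence (ha : Entails Γ a) (hb : Entails Γ b)
    (h : ∀ v, IsValuation v → v a = true → v b = true → v c = true) : Entails Γ c := by
  obtain ⟨La, hLa, hpa⟩ := ha
  obtain ⟨Lb, hLb, hpb⟩ := hb
  refine ⟨La ++ Lb, List.forall_mem_append.2 ⟨hLa, hLb⟩,
    .of_taut_consequence₂ hpa hpb fun v hv h₁ h₂ => ?_⟩
  simp only [hv.foldr_impl_eq_true, List.forall_mem_append] at h₁ h₂ ⊢
  exact fun hL => h v hv (h₁ hL.1) (h₂ hL.2)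

theorem Entails.impl_of_insert (h : Entails (insert a Γ) b) : Entails Γ (impl a b) := by
  classical
  obtain ⟨L, hL, hp⟩ := h
  refine ⟨L.filter (· ≠ a), fun x hx => ?_,
    .of_taut_consequence (Φ := [L.foldr impl b]) (by simpa) fun v hv hΦ => ?_⟩
  · simp only [List.mem_filter, decide_eq_true_eq] at hx
    exact (hL x hx.1).resolve_left hx.2
  · simp only [List.forall_mem_singleton, hv.foldr_impl_eq_true, hv.impl_eq_true,
      List.mem_filter, decide_eq_true_eq] at hΦ ⊢
    refine fun hL' ha => hΦ fun x hx => ?_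
    by_cases hxa : x = a
    · exact hxa ▸ ha
    · exact hL' x ⟨hx, hxa⟩

theorem Entails.neg_of_not_consistent_insert (h : ¬Consistent (insert a Γ)) :
    Entails Γ (.neg a) := by
  obtain ⟨b, hb, hnb⟩ := not_not.1 h
  refine hb.impl_of_insert.of_taut_consequence hnb.impl_of_insert fun v hv h₁ h₂ => ?_
  simp only [hv.impl_eq_true, hv.neg_eq_true] at h₁ h₂ ⊢
  tauto

theorem Entails.of_not_consistent_insert_neg (h : ¬Consistent (insert (.neg a) Γ)) :
    Entails Γ a := by
  have hnn := Entails.neg_of_not_consistent_insert h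
  exact hnn.of_taut_consequence hnn fun v hv h _ => by
    simpa only [hv.neg_eq_true, not_not] using h

theorem Entails.provable (h : Entails ∅ a) : Provable a := by
  obtain ⟨L, hL, hp⟩ := h
  rwa [List.eq_nil_iff_forall_not_mem.2 hL] at hp

theorem consistent_singleton_neg (h : ¬Provable a) : Consistent {.neg a} := by
  intro hinc
  refine h (Entails.of_not_consistent_insert_neg (Γ := ∅) ?_).provable
  rw [insert_empty_eq]
  exact not_not_intro hinc

theorem Entails.dd {Γ Δ : Set (Formula V Pred ar)} {ψ : Formula V Pred ar} (X : Finset V)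
    (h : Entails Γ ψ) (hΓΔ : ∀ χ ∈ Γ, .dd X χ ∈ Δ) : Entails Δ (.dd X ψ) := by
  obtain ⟨L, hL, hp⟩ := h
  refine ⟨L.map (.dd X), fun _ hχ => ?_, (provable_dd_foldr_impl X L ψ).mp (.nec X hp)⟩
  obtain ⟨χ, hχL, rfl⟩ := List.mem_map.1 hχ
  exact hΓΔ χ (hL χ hχL)

theorem consistent_sUnion_of_isChain {c : Set (Set (Formula V Pred ar))}
    (hc : ∀ Γ ∈ c, Consistent Γ) (hchain : IsChain (· ⊆ ·) c) (hne : c.Nonempty) :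
    Consistent (⋃₀ c) := by
  rintro ⟨a, ⟨La, hLa, hpa⟩, ⟨Lb, hLb, hpb⟩⟩
  have hsub : {x | x ∈ La ++ Lb} ⊆ ⋃₀ c := fun x hx =>
    (List.mem_append.1 hx).elim (hLa x) (hLb x)
  obtain ⟨Γ, hΓ, hLΓ⟩ := hchain.directedOn.exists_mem_subset_of_finite_of_subset_sUnion hne
    (La ++ Lb).finite_toSet hsub
  exact hc Γ hΓ ⟨a, ⟨La, fun x hx => hLΓ (List.mem_append_left Lb hx), hpa⟩,
    ⟨Lb, fun x hx => hLΓ (List.mem_append_right La hx), hpb⟩⟩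

theorem exists_maximalConsistent_superset (h : Consistent Γ) :
    ∃ Δ, Γ ⊆ Δ ∧ MaximalConsistent Δ :=
  zorn_subset_nonempty {Δ | Consistent Δ}
    (fun c hc hchain hne => ⟨⋃₀ c, consistent_sUnion_of_isChain hc hchain hne,
      fun _ => Set.subset_sUnion_of_mem⟩) Γ h

namespace MaximalConsistent

variable (hΓ : MaximalConsistent Γ)
include hΓ

theorem mem_of_entails (h : Entails Γ a) : a ∈ Γ := by
  by_contra ha
  have hins : ¬Consistent (insert a Γ) := fun hc =>
    ha (hΓ.2 hc (Set.subset_insert a Γ) (Set.mem_insert a Γ))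
  exact hΓ.1 ⟨a, h, .neg_of_not_consistent_insert hins⟩

theorem mem_of_provable (h : Provable a) : a ∈ Γ :=
  hΓ.mem_of_entails (.of_provable h)

theorem mem_of_taut_consequence (ha : a ∈ Γ) (hb : b ∈ Γ)
    (h : ∀ v, IsValuation v → v a = true → v b = true → v c = true) : c ∈ Γ :=
  hΓ.mem_of_entails ((Entails.of_mem ha).of_taut_consequence (.of_mem hb) h)

theorem neg_mem_iff : .neg a ∈ Γ ↔ a ∉ Γ := by
  refine ⟨fun hna ha => hΓ.1 ⟨a, .of_mem ha, .of_mem hna⟩, fun ha => ?_⟩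
  refine hΓ.mem_of_entails (.neg_of_not_consistent_insert fun hc => ha ?_)
  exact hΓ.2 hc (Set.subset_insert a Γ) (Set.mem_insert a Γ)

theorem conj_mem_iff : .conj a b ∈ Γ ↔ a ∈ Γ ∧ b ∈ Γ := by
  refine ⟨fun h => ⟨?_, ?_⟩, fun h => ?_⟩
  · exact hΓ.mem_of_taut_consequence h h fun v hv h _ => (hv.conj_eq_true.1 h).1
  · exact hΓ.mem_of_taut_consequence h h fun v hv h _ => (hv.conj_eq_true.1 h).2
  · exact hΓ.mem_of_taut_consequence h.1 h.2 fun v hv ha hb => hv.conj_eq_true.2 ⟨ha, hb⟩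

theorem mem_of_impl_mem (hab : impl a b ∈ Γ) (ha : a ∈ Γ) : b ∈ Γ := by
  simp only [impl, hΓ.neg_mem_iff, hΓ.conj_mem_iff, not_and, not_not] at hab
  exact hab ha

theorem depPrem_mem_iff {X Y : Finset V} :
    depPrem X Y a ∈ Γ ↔ (∀ y ∈ Y, .dep X y ∈ Γ) ∧ a ∈ Γ :=
  depPrem_iff (p := (· ∈ Γ)) (fun _ _ => hΓ.conj_mem_iff) X Y a

theorem dep_mem_of_dep {X Y : Finset V} {z : V} (hXY : ∀ y ∈ Y, .dep X y ∈ Γ)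
    (hYz : .dep Y z ∈ Γ) : .dep X z ∈ Γ :=
  hΓ.mem_of_impl_mem (hΓ.mem_of_provable (.trans X Y z)) (hΓ.depPrem_mem_iff.2 ⟨hXY, hYz⟩)

end MaximalConsistent

end Consistency

variable (V Pred ar) in
def World : Type :=
  {Γ : Set (Formula V Pred ar) // MaximalConsistent Γ}

def CanonRel (X : Finset V) (Γ Δ : World V Pred ar) : Prop :=
  ∀ ψ, .dd X ψ ∈ Γ.1 → ψ ∈ Δ.1

namespace CanonRel

variable {X Y : Finset V} {Γ Δ Θ : World V Pred ar}

theorem refl (X : Finset V) (Γ : World V Pred ar) : CanonRel X Γ Γ :=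
  fun ψ h => Γ.2.mem_of_impl_mem (Γ.2.mem_of_provable (.elim X ψ)) h

theorem mem_of_free_subset (h : CanonRel X Γ Δ) {ψ : Formula V Pred ar} (hψ : ψ ∈ Γ.1)
    (hfree : Free ψ ⊆ X) : ψ ∈ Δ.1 :=
  h ψ (Γ.2.mem_of_impl_mem (Γ.2.mem_of_provable (.intro X ψ hfree)) hψ)

theorem symm (h : CanonRel X Γ Δ) : CanonRel X Δ Γ := by
  intro ψ hψ
  by_contra hψΓ
  have hnd : .neg (.dd X ψ) ∈ Γ.1 := Γ.2.neg_mem_iff.2 fun hd => hψΓ (refl X Γ ψ hd)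
  exact Δ.2.neg_mem_iff.1 (h.mem_of_free_subset hnd subset_rfl) hψ

theorem trans (h₁ : CanonRel X Γ Δ) (h₂ : CanonRel X Δ Θ) : CanonRel X Γ Θ :=
  fun ψ hψ => h₂ ψ (h₁.mem_of_free_subset hψ subset_rfl)

theorem of_dep (hXY : ∀ y ∈ Y, .dep X y ∈ Γ.1) (h : CanonRel X Γ Δ) : CanonRel Y Γ Δ :=
  fun ψ hψ => h ψ (Γ.2.mem_of_impl_mem (Γ.2.mem_of_provable (.transfer X Y ψ))
    (Γ.2.depPrem_mem_iff.2 ⟨hXY, hψ⟩))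

theorem exists_notMem {ψ : Formula V Pred ar} (h : .dd X ψ ∉ Γ.1) :
    ∃ Δ, CanonRel X Γ Δ ∧ ψ ∉ Δ.1 := by
  set S : Set (Formula V Pred ar) := {χ | .dd X χ ∈ Γ.1}
  have hS : Consistent (insert (.neg ψ) S) := fun hinc => by
    have hψ := Entails.of_not_consistent_insert_neg (not_not_intro hinc)
    exact h (Γ.2.mem_of_entails (hψ.dd X fun _ hχ => hχ))
  obtain ⟨Δ, hSΔ, hΔ⟩ := exists_maximalConsistent_superset hS
  refine ⟨⟨Δ, hΔ⟩, fun χ hχ => hSΔ (Set.mem_insert_of_mem _ hχ), ?_⟩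
  exact hΔ.neg_mem_iff.1 (hSΔ (Set.mem_insert _ S))

end CanonRel

section CanonicalModel

variable (V Pred ar) in
/-- Paths `(X₁, Γ₁) ⋯ (Xₙ, Γₙ)` of the unravelled canonical model, latest step first. -/
abbrev Path : Type :=
  List (Finset V × World V Pred ar)

variable (w₀ : World V Pred ar)

def tip : Path V Pred ar → World V Pred ar
  | [] => w₀
  | p :: _ => p.2

def IsPath : Path V Pred ar → Prop
  | [] => True
  | p :: H => IsPath H ∧ CanonRel p.1 (tip w₀ H) p.2

open Classical in
/-- The suffix of a path at which the value of `x` was last reset: a step `(X, Δ)` taken from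
`Γ` keeps the value of `x` exactly when `D_X x ∈ Γ`. -/
noncomputable def anchor (x : V) : Path V Pred ar → Path V Pred ar
  | [] => []
  | p :: H => if .dep p.1 x ∈ (tip w₀ H).1 then anchor x H else p :: H

open Classical in
noncomputable def anchorSet (X : Finset V) : Path V Pred ar → Path V Pred ar
  | [] => []
  | p :: H => if ∀ x ∈ X, .dep p.1 x ∈ (tip w₀ H).1 then anchorSet X H else p :: H

/-- The value of `x` at a path is its anchor, tagged with `x` so that the values of an atom
determine its variables. -/
noncomputable def canonAssign (H : Path V Pred ar) (x : V) : Path V Pred ar × V :=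
  (anchor w₀ x H, x)

noncomputable def canonModel : DepModel V Pred ar (Path V Pred ar × V) where
  I P := {f | ∃ H z, IsPath w₀ H ∧ f = (fun i => canonAssign w₀ H (z i)) ∧
    .atom P z ∈ (tip w₀ H).1}
  A := canonAssign w₀ '' {H | IsPath w₀ H}

variable {w₀}

theorem anchor_suffix (x : V) (H : Path V Pred ar) : anchor w₀ x H <:+ H := by
  induction H with
  | nil => exact List.suffix_rfl
  | cons p H ih =>
    rw [anchor]
    split_ifs
    · exact ih.trans (List.suffix_cons p H)
    · exact List.suffix_rfl

theorem anchor_suffix_anchorSet {X : Finset V} {x : V} (hx : x ∈ X) (H : Path V Pred ar) :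
    anchor w₀ x H <:+ anchorSet w₀ X H := by
  induction H with
  | nil => exact List.suffix_rfl
  | cons p H ih =>
    rw [anchor, anchorSet]
    by_cases hkeep : ∀ x ∈ X, .dep p.1 x ∈ (tip w₀ H).1
    · rw [if_pos hkeep, if_pos (hkeep x hx)]
      exact ih
    · rw [if_neg hkeep]
      split_ifs
      · exact (anchor_suffix x H).trans (List.suffix_cons p H)
      · exact List.suffix_rfl

theorem exists_anchorSet_eq_anchor {X : Finset V} (hX : X.Nonempty) (H : Path V Pred ar) :
    ∃ x ∈ X, anchorSet w₀ X H = anchor w₀ x H := by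
  induction H with
  | nil => exact ⟨hX.choose, hX.choose_spec, rfl⟩
  | cons p H ih =>
    rw [anchorSet]
    split_ifs with hkeep
    · obtain ⟨x, hx, he⟩ := ih
      exact ⟨x, hx, by rw [anchor, if_pos (hkeep x hx), he]⟩
    · push Not at hkeep
      obtain ⟨x, hx, hreset⟩ := hkeep
      exact ⟨x, hx, by rw [anchor, if_neg hreset]⟩

theorem anchorSet_empty (H : Path V Pred ar) : anchorSet w₀ ∅ H = [] := by
  induction H with
  | nil => rfl
  | cons p H ih => rwa [anchorSet, if_pos (by simp)]

theorem anchorSet_congr {X : Finset V} {H G : Path V Pred ar}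
    (h : ∀ x ∈ X, anchor w₀ x H = anchor w₀ x G) :
    anchorSet w₀ X H = anchorSet w₀ X G := by
  rcases X.eq_empty_or_nonempty with rfl | hX
  · rw [anchorSet_empty, anchorSet_empty]
  obtain ⟨x, hx, hxH⟩ := exists_anchorSet_eq_anchor (w₀ := w₀) hX H
  obtain ⟨y, hy, hyG⟩ := exists_anchorSet_eq_anchor (w₀ := w₀) hX G
  have hHG : anchorSet w₀ X H <:+ anchorSet w₀ X G :=
    hxH ▸ h x hx ▸ anchor_suffix_anchorSet hx G
  have hGH : anchorSet w₀ X G <:+ anchorSet w₀ X H :=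
    hyG ▸ (h y hy).symm ▸ anchor_suffix_anchorSet hy H
  exact hHG.eq_of_length (hHG.length_le.antisymm hGH.length_le)

theorem canonRel_tip_anchorSet (X : Finset V) {H : Path V Pred ar} (hH : IsPath w₀ H) :
    CanonRel X (tip w₀ (anchorSet w₀ X H)) (tip w₀ H) := by
  induction H with
  | nil => exact .refl X w₀
  | cons p H ih =>
    rw [anchorSet]
    split_ifs with hkeep
    · exact (ih hH.1).trans (hH.2.of_dep hkeep)
    · exact .refl X _

theorem canonRel_tip_of_anchor_eq {X : Finset V} {H G : Path V Pred ar} (hH : IsPath w₀ H)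
    (hG : IsPath w₀ G) (h : ∀ x ∈ X, anchor w₀ x H = anchor w₀ x G) :
    CanonRel X (tip w₀ H) (tip w₀ G) := by
  have hHG := canonRel_tip_anchorSet X hG
  rw [← anchorSet_congr h] at hHG
  exact (canonRel_tip_anchorSet X hH).symm.trans hHG

theorem anchor_eq_anchor_anchorSet {X : Finset V} {y : V} {H : Path V Pred ar}
    (hH : IsPath w₀ H) (hdep : .dep X y ∈ (tip w₀ H).1) :
    anchor w₀ y H = anchor w₀ y (anchorSet w₀ X H) := by
  induction H with
  | nil => rfl
  | cons p H ih =>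
    rw [anchorSet]
    split_ifs with hkeep
    · have hdepH : .dep X y ∈ (tip w₀ H).1 :=
        (hH.2.of_dep hkeep).symm.mem_of_free_subset hdep subset_rfl
      rw [anchor, if_pos ((tip w₀ H).2.dep_mem_of_dep hkeep hdepH)]
      exact ih hH.1 hdepH
    · rfl

end CanonicalModel

section TruthLemma

variable {w₀ : World V Pred ar}

theorem canonAssign_mem {H : Path V Pred ar} (hH : IsPath w₀ H) :
    canonAssign w₀ H ∈ (canonModel w₀).A :=
  ⟨H, hH, rfl⟩

theorem agree_canonAssign_iff {X : Set V} {H G : Path V Pred ar} :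
    agree X (canonAssign w₀ H) (canonAssign w₀ G) ↔
      ∀ x ∈ X, anchor w₀ x H = anchor w₀ x G := by
  simp [agree, canonAssign]

theorem agree_canonAssign_cons (X : Finset V) (Δ : World V Pred ar) (H : Path V Pred ar) :
    agree X (canonAssign w₀ H) (canonAssign w₀ ((X, Δ) :: H)) :=
  agree_canonAssign_iff.2 fun x hx => by
    rw [anchor, if_pos ((tip w₀ H).2.mem_of_provable (.proj X x hx))]

theorem sat_atom_iff (P : Pred) (z : Fin (ar P) → V) {H : Path V Pred ar} (hH : IsPath w₀ H) :
    Sat (canonModel w₀) (.atom P z) (canonAssign w₀ H) ↔ .atom P z ∈ (tip w₀ H).1 := by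
  refine ⟨?_, fun h => ⟨H, z, hH, rfl, h⟩⟩
  rintro ⟨G, z', hG, hf, hmem⟩
  obtain rfl : z' = z := funext fun i => (congrArg Prod.snd (congrFun hf i)).symm
  refine (canonRel_tip_of_anchor_eq hG hH fun x hx => ?_).mem_of_free_subset hmem subset_rfl
  obtain ⟨i, -, rfl⟩ := Finset.mem_image.1 hx
  exact (congrArg Prod.fst (congrFun hf i)).symm

theorem sat_dd_iff {X : Finset V} {a : Formula V Pred ar}
    (ih : ∀ G, IsPath w₀ G →
      (Sat (canonModel w₀) a (canonAssign w₀ G) ↔ a ∈ (tip w₀ G).1))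
    {H : Path V Pred ar} (hH : IsPath w₀ H) :
    Sat (canonModel w₀) (.dd X a) (canonAssign w₀ H) ↔ .dd X a ∈ (tip w₀ H).1 := by
  constructor
  · intro hsat
    by_contra hdd
    obtain ⟨Δ, hrel, ha⟩ := CanonRel.exists_notMem hdd
    have hG : IsPath w₀ ((X, Δ) :: H) := ⟨hH, hrel⟩
    exact ha ((ih _ hG).1 (hsat _ (canonAssign_mem hG) (agree_canonAssign_cons X Δ H)))
  · rintro hdd _ ⟨G, hG, rfl⟩ hagree
    exact (ih G hG).2 (canonRel_tip_of_anchor_eq hH hG (agree_canonAssign_iff.1 hagree) a hdd)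

theorem sat_dep_iff {X : Finset V} {y : V} {H : Path V Pred ar} (hH : IsPath w₀ H) :
    Sat (canonModel w₀) (.dep X y) (canonAssign w₀ H) ↔ .dep X y ∈ (tip w₀ H).1 := by
  constructor
  · intro hsat
    by_contra hdep
    have hG : IsPath w₀ ((X, tip w₀ H) :: H) := ⟨hH, .refl X _⟩
    have hy : anchor w₀ y H = (X, tip w₀ H) :: H := by
      have := congrArg Prod.fst (hsat _ (canonAssign_mem hG) (agree_canonAssign_cons X _ H))
      rwa [canonAssign, canonAssign, anchor, if_neg hdep] at this
    have hlen := (anchor_suffix (w₀ := w₀) y H).length_le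
    rw [hy, List.length_cons] at hlen
    omega
  · rintro hdep _ ⟨G, hG, rfl⟩ hagree
    have h := agree_canonAssign_iff.1 hagree
    have hdepG := (canonRel_tip_of_anchor_eq hH hG h).mem_of_free_subset hdep subset_rfl
    rw [canonAssign, canonAssign, anchor_eq_anchor_anchorSet hH hdep,
      anchor_eq_anchor_anchorSet hG hdepG, anchorSet_congr h]

theorem sat_canonModel_iff (a : Formula V Pred ar) {H : Path V Pred ar} (hH : IsPath w₀ H) :
    Sat (canonModel w₀) a (canonAssign w₀ H) ↔ a ∈ (tip w₀ H).1 := by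
  induction a generalizing H with
  | atom P z => exact sat_atom_iff P z hH
  | neg a ih => exact (not_congr (ih hH)).trans (tip w₀ H).2.neg_mem_iff.symm
  | conj a b iha ihb => exact (and_congr (iha hH) (ihb hH)).trans (tip w₀ H).2.conj_mem_iff.symm
  | dd X a ih => exact sat_dd_iff (fun _ hG => ih hG) hH
  | dep X y => exact sat_dep_iff hH

end TruthLemma

theorem completeness {φ : Formula V Pred ar}
    (h : ∀ (O : Type) (M : DepModel V Pred ar O) (s : V → O), s ∈ M.A → Sat M φ s) :
    Provable φ := by
  by_contra hφ
  obtain ⟨Γ, hΓφ, hΓ⟩ := exists_maximalConsistent_superset (consistent_singleton_neg hφ)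
  let w₀ : World V Pred ar := ⟨Γ, hΓ⟩
  have hsat := h _ (canonModel w₀) _ (canonAssign_mem (H := []) trivial)
  exact hΓ.neg_mem_iff.1 (hΓφ rfl) ((sat_canonModel_iff φ (H := []) trivial).1 hsat)

end LFD

open LFD

/-- Completeness: the Hilbert system **LFD** is sound and complete for dependence
models: `φ` is provable iff `φ` is true at every admissible assignment of every
dependence model. -/
theorem stmt13 {V Pred : Type} [DecidableEq V] {ar : Pred → ℕ}
    (φ : Formula V Pred ar) :
    Provable φ ↔
      ∀ (O : Type) (M : DepModel V Pred ar O) (s : V → O), s ∈ M.A → Sat M φ s :=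
  ⟨fun h _ M => soundness M h, completeness⟩
end

section
/- The conditional dependence atom is not definable in LFD: over the vocabulary with two variables x, y and one binary predicate symbol P, there is no LFD formula θ such that for every dependence model M = (O, I, A) and every admissible assignment s ∈ A, M, s ⊨ θ holds iff s satisfies the conditional dependence D_x^{Pxy} y, i.e., iff for all t ∈ A, (t ⊨ Pxy and s =_x t) implies s =_y t. -/
open LFD

/-- The atomic formula `P x y` over the vocabulary with the two variables
`x = 0, y = 1 : Fin 2` and a single binary predicate symbol. -/
def Pxy : Formula (Fin 2) Unit (fun _ => 2) :=
  Formula.atom () (fun i => i)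

/-! LFD formulas are invariant under bisimulations that respect atoms, dependence atoms and the
modalities `𝔻_X`. In the two models below all admissible assignments agree on `x`, and two
of them agree on `y` only if they are equal, so `D_X y` has the same meaning in both; the
bisimulation `Z` relates `(0,1)` in the first model, where `P x y` picks out only `(0,1)` and
`D_x^{Pxy} y` holds, to `(0,1)` in the second, where `(0,2)` also satisfies `P x y` and the
conditional dependence fails. -/

namespace LFD

variable {V Pred O O₁ O₂ : Type} {ar : Pred → ℕ}

/-- The conditional dependence atom `D_x^ψ y`. -/
def CondDep (M : DepModel V Pred ar O) (ψ : Formula V Pred ar) (x y : V) (s : V → O) : Prop :=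
  ∀ t ∈ M.A, Sat M ψ t → s x = t x → s y = t y

structure IsBisimulation (M₁ : DepModel V Pred ar O₁) (M₂ : DepModel V Pred ar O₂)
    (Z : (V → O₁) → (V → O₂) → Prop) : Prop where
  sat_atom_iff {s t} : Z s t → ∀ P x, Sat M₁ (.atom P x) s ↔ Sat M₂ (.atom P x) t
  sat_dep_iff {s t} : Z s t → ∀ X y, Sat M₁ (.dep X y) s ↔ Sat M₂ (.dep X y) t
  forth {s t} : Z s t → ∀ X : Finset V, ∀ s' ∈ M₁.A, agree (↑X) s s' →
    ∃ t' ∈ M₂.A, agree (↑X) t t' ∧ Z s' t'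
  back {s t} : Z s t → ∀ X : Finset V, ∀ t' ∈ M₂.A, agree (↑X) t t' →
    ∃ s' ∈ M₁.A, agree (↑X) s s' ∧ Z s' t'

namespace IsBisimulation

variable {M₁ : DepModel V Pred ar O₁} {M₂ : DepModel V Pred ar O₂}
  {Z : (V → O₁) → (V → O₂) → Prop}

theorem sat_iff (hZ : IsBisimulation M₁ M₂ Z) (φ : Formula V Pred ar) {s : V → O₁}
    {t : V → O₂} (hst : Z s t) : Sat M₁ φ s ↔ Sat M₂ φ t := by
  induction φ generalizing s t with
  | atom P x => exact hZ.sat_atom_iff hst P x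
  | neg φ ih => exact not_congr (ih hst)
  | conj φ ψ ihφ ihψ => exact and_congr (ihφ hst) (ihψ hst)
  | dep X y => exact hZ.sat_dep_iff hst X y
  | dd X φ ih =>
    constructor
    · intro hs t' ht' hagree
      obtain ⟨s', hs', hagree', hZ'⟩ := hZ.back hst X t' ht' hagree
      exact (ih hZ').1 (hs s' hs' hagree')
    · intro ht s' hs' hagree
      obtain ⟨t', ht', hagree', hZ'⟩ := hZ.forth hst X s' hs' hagree
      exact (ih hZ').2 (ht t' ht' hagree')

theorem not_definable (hZ : IsBisimulation M₁ M₂ Z)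
    (Q : ∀ {O : Type}, DepModel V Pred ar O → (V → O) → Prop) {s : V → O₁} {t : V → O₂}
    (hst : Z s t) (hs : s ∈ M₁.A) (ht : t ∈ M₂.A) (h₁ : Q M₁ s) (h₂ : ¬ Q M₂ t) :
    ¬ ∃ θ : Formula V Pred ar, ∀ (O : Type) (M : DepModel V Pred ar O) (s : V → O),
      s ∈ M.A → (Sat M θ s ↔ Q M s) := by
  rintro ⟨θ, hθ⟩
  exact h₂ ((hθ _ M₂ t ht).1 ((hZ.sat_iff θ hst).1 ((hθ _ M₁ s hs).2 h₁)))

end IsBisimulation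

namespace Counterexample

abbrev Asg := Fin 2 → Fin 4

def A₁ : Finset Asg := {![0, 1], ![0, 2]}

def A₂ : Finset Asg := {![0, 1], ![0, 2], ![0, 3]}

def P₁ : Finset (Fin 2 → Fin 4) := {![0, 1]}

def P₂ : Finset (Fin 2 → Fin 4) := {![0, 1], ![0, 2]}

def M₁ : DepModel (Fin 2) Unit (fun _ => 2) (Fin 4) := ⟨fun _ => ↑P₁, ↑A₁⟩

def M₂ : DepModel (Fin 2) Unit (fun _ => 2) (Fin 4) := ⟨fun _ => ↑P₂, ↑A₂⟩

def Z : Finset (Asg × Asg) := {(![0, 1], ![0, 1]), (![0, 1], ![0, 2]), (![0, 2], ![0, 3])}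

theorem sat_dep_M₁_iff {s : Asg} (hs : s ∈ A₁) (X : Finset (Fin 2)) (y : Fin 2) :
    Sat M₁ (.dep X y) s ↔ 1 ∈ X ∨ y = 0 :=
  (by decide : ∀ s ∈ A₁, ∀ (X : Finset (Fin 2)) (y : Fin 2),
    (∀ u ∈ A₁, (∀ x ∈ X, s x = u x) → s y = u y) ↔ 1 ∈ X ∨ y = 0) s hs X y

theorem sat_dep_M₂_iff {s : Asg} (hs : s ∈ A₂) (X : Finset (Fin 2)) (y : Fin 2) :
    Sat M₂ (.dep X y) s ↔ 1 ∈ X ∨ y = 0 :=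
  (by decide : ∀ s ∈ A₂, ∀ (X : Finset (Fin 2)) (y : Fin 2),
    (∀ u ∈ A₂, (∀ x ∈ X, s x = u x) → s y = u y) ↔ 1 ∈ X ∨ y = 0) s hs X y

theorem isBisimulation_Z : IsBisimulation M₁ M₂ (fun s t => (s, t) ∈ Z) where
  sat_atom_iff {s t} hst _ x :=
    (by decide +kernel : ∀ p ∈ Z, ∀ x : Fin 2 → Fin 2,
      (fun i => p.1 (x i)) ∈ P₁ ↔ (fun i => p.2 (x i)) ∈ P₂) (s, t) hst x
  sat_dep_iff {s t} hst X y := by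
    have hmem : s ∈ A₁ ∧ t ∈ A₂ :=
      (by decide +kernel : ∀ p ∈ Z, p.1 ∈ A₁ ∧ p.2 ∈ A₂) (s, t) hst
    rw [sat_dep_M₁_iff hmem.1, sat_dep_M₂_iff hmem.2]
  forth {s t} hst :=
    (by decide : ∀ p ∈ Z, ∀ X : Finset (Fin 2), ∀ s' ∈ A₁, (∀ x ∈ X, p.1 x = s' x) →
      ∃ t' ∈ A₂, (∀ x ∈ X, p.2 x = t' x) ∧ (s', t') ∈ Z) (s, t) hst
  back {s t} hst :=
    (by decide : ∀ p ∈ Z, ∀ X : Finset (Fin 2), ∀ t' ∈ A₂, (∀ x ∈ X, p.2 x = t' x) →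
      ∃ s' ∈ A₁, (∀ x ∈ X, p.1 x = s' x) ∧ (s', t') ∈ Z) (s, t) hst

theorem condDep_M₁ : CondDep M₁ Pxy 0 1 ![0, 1] :=
  (by decide : ∀ t ∈ A₁, t ∈ P₁ → (0 : Fin 4) = t 0 → (1 : Fin 4) = t 1)

theorem not_condDep_M₂ : ¬ CondDep M₂ Pxy 0 1 ![0, 1] := fun h =>
  (by decide : (1 : Fin 4) ≠ 2)
    (h ![0, 2] (by decide : ![0, 2] ∈ A₂) (by decide : ![0, 2] ∈ P₂) rfl)

end Counterexample

end LFD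

/-- The conditional dependence atom is not definable in LFD: over the vocabulary with
two variables `x, y` and one binary predicate `P`, there is no LFD formula `θ` such
that, in every dependence model and at every admissible assignment `s`, `θ` is true at
`s` iff `D_x^{Pxy} y` holds at `s` (i.e. iff every admissible `t` satisfying `Pxy` and
agreeing with `s` on `x` agrees with `s` on `y`). -/
theorem stmt19 :
    ¬ ∃ θ : Formula (Fin 2) Unit (fun _ => 2),
      ∀ (O : Type) (M : DepModel (Fin 2) Unit (fun _ => 2) O) (s : Fin 2 → O),
        s ∈ M.A →
        (Sat M θ s ↔
          ∀ t ∈ M.A, Sat M Pxy t → s 0 = t 0 → s 1 = t 1) :=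
  Counterexample.isBisimulation_Z.not_definable (fun M s => CondDep M Pxy 0 1 s)
    (by decide : (![0, 1], ![0, 1]) ∈ Counterexample.Z) (Finset.mem_coe.2 (by decide))
    (Finset.mem_coe.2 (by decide))
    Counterexample.condDep_M₁ Counterexample.not_condDep_M₂
end
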